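/- arXiv:math/9906080 — 6 statements merged into one kernel-verified Lean document; each statement's English description precedes it below -/
import Mathlib

section
/- Let A be a Banach algebra with a contractive approximate identity and let X be a nondegenerate Banach left A-module (meaning the span of A·X is dense in X). Then every element x ∈ X can be written as x = a·x' for some a ∈ A and x' ∈ X; in particular A·X = X. -/
open Filter Topology

set_option linter.unusedSectionVars false

namespace CohenAux

variable {A : Type*} [NonUnitalNormedRing A] [NormedSpace ℂ A] [CompleteSpace A]
    [IsScalarTower ℂ A A] [SMulCommClass ℂ A A]

local notation "𝓤" => WithLp 1 (Unitization ℂ A)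

noncomputable def fst' (u : 𝓤) : ℂ := (WithLp.equiv 1 (Unitization ℂ A) u).fst
noncomputable def snd' (u : 𝓤) : A := (WithLp.equiv 1 (Unitization ℂ A) u).snd
noncomputable def ιU (a : A) : 𝓤 :=
  (WithLp.equiv 1 (Unitization ℂ A)).symm (Unitization.inr a)

lemma fst'_mul (u v : 𝓤) : fst' (u * v) = fst' u * fst' v := Unitization.fst_mul _ _
lemma fst'_add (u v : 𝓤) : fst' (u + v) = fst' u + fst' v := Unitization.fst_add _ _
lemma fst'_neg (u : 𝓤) : fst' (-u) = - fst' u := Unitization.fst_neg _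
lemma fst'_sub (u v : 𝓤) : fst' (u - v) = fst' u - fst' v := by
  rw [sub_eq_add_neg, sub_eq_add_neg, fst'_add, fst'_neg]
lemma fst'_one : fst' (1 : 𝓤) = 1 := rfl
lemma fst'_zero : fst' (0 : 𝓤) = 0 := rfl
lemma fst'_smul (z : ℂ) (u : 𝓤) : fst' (z • u) = z * fst' u := Unitization.fst_smul _ _
lemma fst'_ιU (a : A) : fst' (ιU a) = 0 := Unitization.fst_inr _ _

lemma snd'_mul (u v : 𝓤) :
    snd' (u * v) = fst' u • snd' v + fst' v • snd' u + snd' u * snd' v :=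
  Unitization.snd_mul _ _
lemma snd'_add (u v : 𝓤) : snd' (u + v) = snd' u + snd' v := Unitization.snd_add _ _
lemma snd'_neg (u : 𝓤) : snd' (-u) = - snd' u := Unitization.snd_neg _
lemma snd'_sub (u v : 𝓤) : snd' (u - v) = snd' u - snd' v := by
  rw [sub_eq_add_neg, sub_eq_add_neg, snd'_add, snd'_neg]
lemma snd'_one : snd' (1 : 𝓤) = 0 := rfl
lemma snd'_zero : snd' (0 : 𝓤) = 0 := rfl
lemma snd'_smul (z : ℂ) (u : 𝓤) : snd' (z • u) = z • snd' u := Unitization.snd_smul _ _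
lemma snd'_ιU (a : A) : snd' (ιU a) = a := Unitization.snd_inr _ _

lemma U_ext {u v : 𝓤} (h1 : fst' u = fst' v) (h2 : snd' u = snd' v) : u = v :=
  (WithLp.equiv 1 (Unitization ℂ A)).injective (Unitization.ext h1 h2)

lemma norm_U (u : 𝓤) : ‖u‖ = ‖fst' u‖ + ‖snd' u‖ := WithLp.unitization_norm_def u

lemma norm_ιU (a : A) : ‖ιU a‖ = ‖a‖ := WithLp.unitization_norm_inr a

lemma norm_snd'_le (u : 𝓤) : ‖snd' u‖ ≤ ‖u‖ := by
  rw [norm_U]; have := norm_nonneg (fst' u); linarith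

noncomputable instance : NormOneClass 𝓤 :=
  ⟨by rw [norm_U, fst'_one, snd'_one]; simp⟩

lemma norm_oneSub_inv_le {R : Type*} [NormedRing R] [CompleteSpace R] [NormOneClass R]
    {t : R} (h : ‖t‖ < 1) : ‖(↑(Units.oneSub t h)⁻¹ : R)‖ ≤ (1 - ‖t‖)⁻¹ := by
  have h1 : (↑(Units.oneSub t h)⁻¹ : R) = ∑' n : ℕ, t ^ n := rfl
  rw [h1]
  simpa using tsum_geometric_le_of_norm_lt_one t h

variable {X : Type*} [NormedAddCommGroup X] [NormedSpace ℂ X] [CompleteSpace X]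

noncomputable def rho (smul : A → X → X) (u : 𝓤) (y : X) : X :=
  fst' u • y + smul (snd' u) y

set_option maxHeartbeats 1000000 in
lemma step_ex
    (smul : A → X → X)
    (hnorm : ∀ a x, ‖smul a x‖ ≤ ‖a‖ * ‖x‖)
    {ι : Type*} (l : Filter ι) [l.NeBot] (e : ι → A)
    (he : ∀ i, ‖e i‖ ≤ 1)
    (hcai : ∀ a : A, Filter.Tendsto (fun i => e i * a) l (nhds a))
    (x : X)
    (hmodx : Filter.Tendsto (fun i => smul (e i) x) l (nhds x))
    (hρ_one : ∀ y, rho smul 1 y = y)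
    (hρ_mul : ∀ u v y, rho smul (u * v) y = rho smul u (rho smul v y))
    (hρ_add_left : ∀ u v y, rho smul (u + v) y = rho smul u y + rho smul v y)
    (hρ_sub_left : ∀ u v y, rho smul (u - v) y = rho smul u y - rho smul v y)
    (hρ_sub_right : ∀ u y y', rho smul u (y - y') = rho smul u y - rho smul u y')
    (hρ_smulc : ∀ (z : ℂ) u y, rho smul (z • u) y = z • rho smul u y)
    (hρ_norm : ∀ u y, ‖rho smul u y‖ ≤ ‖u‖ * ‖y‖)
    (hρ_ι : ∀ a y, rho smul (ιU a) y = smul a y)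
    (n : ℕ) (B : 𝓤ˣ) (hB : fst' (↑B : 𝓤) = (((3:ℝ)/4 : ℝ) : ℂ) ^ n) :
    ∃ B' : 𝓤ˣ, fst' (↑B' : 𝓤) = (((3:ℝ)/4 : ℝ) : ℂ) ^ (n+1) ∧
      ‖((↑B' : 𝓤) - ↑B)‖ ≤ ((3:ℝ)/4) ^ n ∧
      ‖rho smul (↑B'⁻¹ : 𝓤) x - rho smul (↑B⁻¹ : 𝓤) x‖ ≤ ((2:ℝ)⁻¹) ^ n := by
  set βc : ℂ := (((3:ℝ)/4 : ℝ) : ℂ) with hβc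
  have hβR : (0:ℝ) < (3:ℝ)/4 := by norm_num
  have hβn0 : ((3:ℝ)/4) ^ n ≠ 0 := by positivity
  have hβc0 : βc ^ n ≠ 0 := by
    rw [hβc]
    norm_cast
  have hfstBi : fst' (↑B⁻¹ : 𝓤) = (βc ^ n)⁻¹ := by
    have h1 : fst' ((↑B⁻¹ : 𝓤) * (↑B : 𝓤)) = 1 := by
      rw [Units.inv_mul]; exact fst'_one
    rw [fst'_mul, hB] at h1
    exact eq_inv_of_mul_eq_one_left h1
  have hnormβi : ‖(βc ^ n)⁻¹‖ = (((3:ℝ)/4) ^ n)⁻¹ := by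
    rw [norm_inv, norm_pow, hβc, Complex.norm_real, Real.norm_eq_abs, abs_of_pos hβR]
  set D : ℝ := ‖(↑B⁻¹ : 𝓤)‖ with hD
  have hD0 : 0 ≤ D := norm_nonneg _
  clear_value D
  set δ : ℝ := min 1 (((2:ℝ)⁻¹) ^ n / (4 * (D + 1) * (1 + ‖x‖))) with hδ
  have hδpos : 0 < δ := by
    apply lt_min one_pos
    have h0 : (0:ℝ) < 4 * (D + 1) * (1 + ‖x‖) := by positivity
    positivity
  have hδ1 : δ ≤ 1 := min_le_left _ _
  have hδ2 : δ ≤ ((2:ℝ)⁻¹) ^ n / (4 * (D + 1) * (1 + ‖x‖)) := min_le_right _ _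
  clear_value δ
  obtain ⟨i, hiv, hix⟩ : ∃ i,
      ‖e i * snd' (↑B⁻¹ : 𝓤) - snd' (↑B⁻¹ : 𝓤)‖ < δ ∧ ‖smul (e i) x - x‖ < δ := by
    have h1 := Metric.tendsto_nhds.mp (hcai (snd' (↑B⁻¹ : 𝓤))) δ hδpos
    have h2 := Metric.tendsto_nhds.mp hmodx δ hδpos
    refine ((h1.and h2).mono ?_).exists
    intro i hi
    exact ⟨by rw [← dist_eq_norm]; exact hi.1, by rw [← dist_eq_norm]; exact hi.2⟩
  set c : ℝ := (1/4) * ((3:ℝ)/4) ^ n with hc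
  have hc0 : 0 < c := by positivity
  have hcle : c ≤ 1/4 := by
    have h1 : ((3:ℝ)/4) ^ n ≤ 1 := pow_le_one₀ (by norm_num) (by norm_num)
    nlinarith
  have hcast : ((c : ℝ) : ℂ) = (1/4 : ℂ) * βc ^ n := by
    rw [hc, hβc]; push_cast; ring
  clear_value c
  set w : 𝓤 := ((c : ℝ) : ℂ) • ((ιU (e i) - 1) * ↑B⁻¹) with hw
  have hdec : (ιU (e i) - 1) * (↑B⁻¹ : 𝓤) = (βc ^ n)⁻¹ • (ιU (e i) - 1) + ιU (e i * snd' (↑B⁻¹ : 𝓤) - snd' (↑B⁻¹ : 𝓤)) := by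
    apply U_ext
    · simp only [fst'_mul, fst'_add, fst'_smul, fst'_sub, fst'_ιU, fst'_one, hfstBi]
      ring
    · simp only [snd'_mul, snd'_add, snd'_smul, snd'_sub, snd'_ιU, snd'_one, fst'_sub,
        fst'_ιU, fst'_one, hfstBi]
      simp only [zero_sub, sub_zero, neg_smul, one_smul]
      abel
  have hnormE1 : ‖ιU (e i) - 1‖ ≤ 2 := by
    rw [norm_U, fst'_sub, snd'_sub, fst'_ιU, snd'_ιU, fst'_one, snd'_one, zero_sub, sub_zero]
    have := he i
    simp only [norm_neg, norm_one]
    linarith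
  have key : c * (((3:ℝ)/4) ^ n)⁻¹ = 1/4 := by
    rw [hc]; field_simp
  have hnormw : ‖w‖ ≤ (3:ℝ)/4 := by
    have h1 : ‖w‖ = c * ‖(ιU (e i) - 1) * (↑B⁻¹ : 𝓤)‖ := by
      rw [hw, norm_smul, Complex.norm_real, Real.norm_eq_abs, abs_of_pos hc0]
    have e1 : ‖(βc ^ n)⁻¹ • (ιU (e i) - 1)‖ ≤ (((3:ℝ)/4) ^ n)⁻¹ * 2 := by
      rw [norm_smul, hnormβi]
      exact mul_le_mul_of_nonneg_left hnormE1 (by positivity)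
    have e2 : ‖ιU (e i * snd' (↑B⁻¹ : 𝓤) - snd' (↑B⁻¹ : 𝓤))‖ ≤ δ := by rw [norm_ιU]; exact hiv.le
    have h2 : ‖(ιU (e i) - 1) * (↑B⁻¹ : 𝓤)‖ ≤ (((3:ℝ)/4) ^ n)⁻¹ * 2 + δ := by
      rw [hdec]
      exact (norm_add_le _ _).trans (add_le_add e1 e2)
    rw [h1]
    calc c * ‖(ιU (e i) - 1) * (↑B⁻¹ : 𝓤)‖ ≤ c * ((((3:ℝ)/4) ^ n)⁻¹ * 2 + δ) :=
          mul_le_mul_of_nonneg_left h2 hc0.le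
      _ = 2 * (c * (((3:ℝ)/4) ^ n)⁻¹) + c * δ := by ring
      _ ≤ 2 * (1/4) + (1/4) * 1 :=
          add_le_add (by rw [key]) (mul_le_mul hcle hδ1 hδpos.le (by norm_num))
      _ ≤ 3/4 := by norm_num
  have hw1 : ‖-w‖ < 1 := by rw [norm_neg]; linarith
  set W : 𝓤ˣ := Units.oneSub (-w) hw1 with hWdef
  have hWval : (↑W : 𝓤) = 1 + w := by rw [hWdef, Units.val_oneSub, sub_neg_eq_add]
  have hWinv : ‖(↑W⁻¹ : 𝓤)‖ ≤ 4 := by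
    refine (norm_oneSub_inv_le hw1).trans ?_
    rw [norm_neg]
    have h34 : (1:ℝ)/4 ≤ 1 - ‖w‖ := by linarith
    calc (1 - ‖w‖)⁻¹ ≤ ((1:ℝ)/4)⁻¹ := by
          apply inv_anti₀ (by norm_num) h34
      _ = 4 := by norm_num
  clear_value W
  refine ⟨W * B, ?_, ?_, ?_⟩
  · have h2 : fst' (↑W : 𝓤) = βc := by
      have hfw : fst' w = - (1/4 : ℂ) := by
        rw [hw, fst'_smul, fst'_mul, fst'_sub, fst'_ιU, fst'_one, hfstBi, hcast, zero_sub]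
        field_simp
      rw [hWval, fst'_add, fst'_one, hfw, hβc]
      push_cast
      norm_num
    rw [Units.val_mul, fst'_mul, h2, hB, pow_succ]
    ring
  · have hdiff : (↑(W * B) : 𝓤) - ↑B = ((c:ℝ):ℂ) • (ιU (e i) - 1) := by
      rw [Units.val_mul, hWval, add_mul, one_mul, add_sub_cancel_left, hw, smul_mul_assoc,
        mul_assoc, Units.inv_mul, mul_one]
    rw [hdiff, norm_smul, Complex.norm_real, Real.norm_eq_abs, abs_of_pos hc0]
    have hp0 : (0:ℝ) ≤ ((3:ℝ)/4) ^ n := by positivity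
    nlinarith [mul_le_mul_of_nonneg_left hnormE1 hc0.le]
  · set W' : 𝓤 := (↑W⁻¹ : 𝓤) with hW'
    have hρ_zero : ∀ y, rho smul (0 : 𝓤) y = 0 := by
      intro y; have h := hρ_sub_left 1 1 y; simpa using h
    have hρ_neg : ∀ u y, rho smul (-u) y = - rho smul u y := by
      intro u y; have h := hρ_sub_left 0 u y; simpa [hρ_zero] using h
    have hWW : W' - 1 = -(W' * w) := by
      have h0 : W' * (↑W : 𝓤) = 1 := Units.inv_mul W
      rw [hWval, mul_add, mul_one] at h0
      rw [← h0]; abel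
    have hBinv : (↑((W * B)⁻¹) : 𝓤) = (↑B⁻¹ : 𝓤) * W' := by
      rw [mul_inv_rev, Units.val_mul]
    have hstep1 : rho smul (↑((W * B)⁻¹) : 𝓤) x - rho smul (↑B⁻¹ : 𝓤) x
        = rho smul (↑B⁻¹ : 𝓤) (- rho smul W' (rho smul w x)) := by
      rw [hBinv, hρ_mul, ← hρ_sub_right]
      congr 1
      have h3 : rho smul W' x - x = rho smul (W' - 1) x := by
        rw [hρ_sub_left, hρ_one]
      rw [h3, hWW, hρ_neg, hρ_mul]
    have hrwx : ‖rho smul w x‖ ≤ δ * (1 + ‖x‖) / 4 := by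
      have h1 : rho smul w x
          = ((c:ℝ):ℂ) • ((βc ^ n)⁻¹ • (smul (e i) x - x) + smul (e i * snd' (↑B⁻¹ : 𝓤) - snd' (↑B⁻¹ : 𝓤)) x) := by
        rw [hw, hρ_smulc, hdec, hρ_add_left, hρ_smulc, hρ_sub_left, hρ_ι, hρ_ι, hρ_one]
      have b1 : ‖(βc ^ n)⁻¹ • (smul (e i) x - x) + smul (e i * snd' (↑B⁻¹ : 𝓤) - snd' (↑B⁻¹ : 𝓤)) x‖
          ≤ (((3:ℝ)/4) ^ n)⁻¹ * δ + δ * ‖x‖ := by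
        refine (norm_add_le _ _).trans (add_le_add ?_ ?_)
        · rw [norm_smul, hnormβi]
          exact mul_le_mul_of_nonneg_left hix.le (by positivity)
        · exact (hnorm _ _).trans (mul_le_mul_of_nonneg_right hiv.le (norm_nonneg x))
      rw [h1, norm_smul, Complex.norm_real, Real.norm_eq_abs, abs_of_pos hc0]
      calc c * ‖(βc ^ n)⁻¹ • (smul (e i) x - x) + smul (e i * snd' (↑B⁻¹ : 𝓤) - snd' (↑B⁻¹ : 𝓤)) x‖
          ≤ c * ((((3:ℝ)/4) ^ n)⁻¹ * δ + δ * ‖x‖) := mul_le_mul_of_nonneg_left b1 hc0.le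
        _ = (c * (((3:ℝ)/4) ^ n)⁻¹) * δ + c * (δ * ‖x‖) := by ring
        _ ≤ (1/4) * δ + (1/4) * (δ * ‖x‖) := by
            rw [key]
            have h5 : c * (δ * ‖x‖) ≤ (1/4) * (δ * ‖x‖) :=
              mul_le_mul_of_nonneg_right hcle (by positivity)
            linarith
        _ = δ * (1 + ‖x‖) / 4 := by ring
    rw [hstep1]
    have t1 : ‖rho smul (↑B⁻¹ : 𝓤) (- rho smul W' (rho smul w x))‖
        ≤ D * (4 * ‖rho smul w x‖) := by
      rw [hD]
      refine (hρ_norm _ _).trans ?_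
      rw [norm_neg]
      refine mul_le_mul_of_nonneg_left ?_ (hD ▸ hD0)
      exact (hρ_norm _ _).trans (mul_le_mul_of_nonneg_right hWinv (norm_nonneg _))
    have hfin : D * (4 * (δ * (1 + ‖x‖) / 4)) ≤ ((2:ℝ)⁻¹) ^ n := by
      have h4 : δ * (4 * (D + 1) * (1 + ‖x‖)) ≤ ((2:ℝ)⁻¹) ^ n :=
        (le_div_iff₀ (by positivity)).mp hδ2
      nlinarith [mul_nonneg (mul_nonneg hδpos.le hD0) (norm_nonneg x),
        mul_nonneg hδpos.le (norm_nonneg x), mul_nonneg hδpos.le hD0]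
    refine t1.trans ?_
    refine (?_ : D * (4 * ‖rho smul w x‖) ≤ D * (4 * (δ * (1 + ‖x‖) / 4))).trans hfin
    exact mul_le_mul_of_nonneg_left (mul_le_mul_of_nonneg_left hrwx (by norm_num)) hD0

end CohenAux

set_option maxHeartbeats 1600000 in
open Filter Topology CohenAux in
/-- Cohen's factorization theorem: if `A` is a complex Banach algebra with a
contractive approximate identity `(e_α)` and `X` is a nondegenerate Banach left `A`-module
(the closed span of `A • X` is all of `X`), then every `x ∈ X` factors as `x = a • x'`
with `a ∈ A`, `x' ∈ X`; in particular `A • X = X`. -/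
theorem cohen_factorization
    {A : Type*} [NonUnitalNormedRing A] [NormedSpace ℂ A] [CompleteSpace A]
    [IsScalarTower ℂ A A] [SMulCommClass ℂ A A]
    {X : Type*} [NormedAddCommGroup X] [NormedSpace ℂ X] [CompleteSpace X]
    (smul : A → X → X)
    (smul_add : ∀ a x y, smul a (x + y) = smul a x + smul a y)
    (add_smul : ∀ a b x, smul (a + b) x = smul a x + smul b x)
    (mul_smul : ∀ a b x, smul (a * b) x = smul a (smul b x))
    (smul_comm : ∀ (z : ℂ) a x, smul (z • a) x = z • smul a x)
    (norm_smul_le : ∀ a x, ‖smul a x‖ ≤ ‖a‖ * ‖x‖)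
    -- a contractive approximate identity for `A`
    {ι : Type*} (l : Filter ι) [l.NeBot] (e : ι → A)
    (he : ∀ i, ‖e i‖ ≤ 1)
    (hcai : ∀ a : A, Tendsto (fun i => e i * a) l (𝓝 a))
    -- nondegeneracy of the module `X`
    (hnd : closure (↑(Submodule.span ℂ {w : X | ∃ a x, w = smul a x}) : Set X) = Set.univ) :
    ∀ x : X, ∃ (a : A) (x' : X), x = smul a x' := by
  intro x
  classical
  -- basic algebraic consequences of the module axioms
  have hsmul0 : ∀ a : A, smul a 0 = 0 := fun a => by
    have h := smul_add a 0 0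
    rw [add_zero] at h
    exact left_eq_add.mp h
  have hzero_smul : ∀ y : X, smul 0 y = 0 := fun y => by
    have h := add_smul 0 0 y
    rw [add_zero] at h
    exact left_eq_add.mp h
  have hsmul_sub : ∀ (a : A) (y z : X), smul a (y - z) = smul a y - smul a z := fun a y z =>
    (AddMonoidHom.mk' (smul a) (smul_add a)).map_sub y z
  have hsub_smul : ∀ (a b : A) (y : X), smul (a - b) y = smul a y - smul b y := fun a b y =>
    (AddMonoidHom.mk' (fun t => smul t y) (fun t s => add_smul t s y)).map_sub a b
  have hcontA : ∀ y : X, Continuous (fun b : A => smul b y) := fun y =>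
    AddMonoidHomClass.continuous_of_bound
      (AddMonoidHom.mk' (fun t => smul t y) (fun t s => add_smul t s y)) ‖y‖
      (fun b => by rw [mul_comm]; exact norm_smul_le b y)
  have hcontX : ∀ a : A, Continuous (fun y : X => smul a y) := fun a =>
    AddMonoidHomClass.continuous_of_bound (AddMonoidHom.mk' (smul a) (smul_add a)) ‖a‖
      (fun y => norm_smul_le a y)
  -- scalar linearity in the module variable (via density)
  have hlin : ∀ (y : X) (a : A) (z : ℂ), smul a (z • y) = z • smul a y := by
    have hsub : ∀ y ∈ Submodule.span ℂ {w : X | ∃ a x, w = smul a x},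
        ∀ (a : A) (z : ℂ), smul a (z • y) = z • smul a y := by
      intro y hy
      induction hy using Submodule.span_induction with
      | mem w hw =>
        obtain ⟨b, yy, rfl⟩ := hw
        intro a z
        calc smul a (z • smul b yy) = smul a (smul (z • b) yy) := by rw [smul_comm]
          _ = smul (a * (z • b)) yy := (mul_smul _ _ _).symm
          _ = smul (z • (a * b)) yy := by rw [mul_smul_comm]
          _ = z • smul (a * b) yy := smul_comm _ _ _
          _ = z • smul a (smul b yy) := by rw [mul_smul]
      | zero => intro a z; rw [smul_zero, hsmul0, smul_zero]
      | add u v hu hv ihu ihv =>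
        intro a z
        rw [_root_.smul_add z u v, smul_add a (z • u) (z • v), ihu a z, ihv a z,
          smul_add a u v, _root_.smul_add z (smul a u) (smul a v)]
      | smul z0 u hu ihu =>
        intro a z
        rw [smul_smul, ihu a (z * z0), ihu a z0, smul_smul]
    intro y a z
    have hyc : y ∈ closure (↑(Submodule.span ℂ {w : X | ∃ a x, w = smul a x}) : Set X) := by
      rw [hnd]; trivial
    have hcl : IsClosed {y : X | smul a (z • y) = z • smul a y} :=
      isClosed_eq ((hcontX a).comp (continuous_const_smul z))
        ((continuous_const_smul z).comp (hcontX a))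
    exact closure_minimal (fun w hw => hsub w hw a z) hcl hyc
  -- the approximate identity also works for the module
  have hmod : ∀ y : X, Tendsto (fun i => smul (e i) y) l (𝓝 y) := by
    have hsub : ∀ y ∈ Submodule.span ℂ {w : X | ∃ a x, w = smul a x},
        Tendsto (fun i => smul (e i) y) l (𝓝 y) := by
      intro y hy
      induction hy using Submodule.span_induction with
      | mem w hw =>
        obtain ⟨b, yy, rfl⟩ := hw
        have h1 : Tendsto (fun i => smul (e i * b) yy) l (𝓝 (smul b yy)) :=
          ((hcontA yy).tendsto b).comp (hcai b)
        exact h1.congr fun i => mul_smul (e i) b yy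
      | zero => simpa [hsmul0] using (tendsto_const_nhds : Tendsto (fun _ : ι => (0:X)) l _)
      | add u v hu hv ihu ihv =>
        exact (ihu.add ihv).congr fun i => (smul_add (e i) u v).symm
      | smul z0 u hu ihu =>
        exact (ihu.const_smul z0).congr fun i => (hlin u (e i) z0).symm
    intro y
    rw [Metric.tendsto_nhds]
    intro ε hε
    have hyc : y ∈ closure (↑(Submodule.span ℂ {w : X | ∃ a x, w = smul a x}) : Set X) := by
      rw [hnd]; trivial
    obtain ⟨y', hy'mem, hy'⟩ := Metric.mem_closure_iff.mp hyc (ε/3) (by linarith)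
    have h2 := Metric.tendsto_nhds.mp (hsub y' hy'mem) (ε/3) (by linarith)
    filter_upwards [h2] with i hi
    have d1 : dist (smul (e i) y) (smul (e i) y') ≤ dist y y' := by
      rw [dist_eq_norm, ← hsmul_sub, dist_eq_norm]
      calc ‖smul (e i) (y - y')‖ ≤ ‖e i‖ * ‖y - y'‖ := norm_smul_le _ _
        _ ≤ 1 * ‖y - y'‖ := mul_le_mul_of_nonneg_right (he i) (norm_nonneg _)
        _ = ‖y - y'‖ := one_mul _
    calc dist (smul (e i) y) y
        ≤ dist (smul (e i) y) (smul (e i) y') + dist (smul (e i) y') y' + dist y' y :=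
          dist_triangle4 _ _ _ _
      _ < ε := by rw [dist_comm y' y]; linarith
  -- properties of the unitized representation `rho`
  have hρ_one : ∀ y : X, rho smul 1 y = y := fun y => by
    simp only [rho, fst'_one, snd'_one, one_smul, hzero_smul, add_zero]
  have hρ_ι : ∀ (a : A) (y : X), rho smul (ιU a) y = smul a y := fun a y => by
    simp only [rho, fst'_ιU, snd'_ιU, zero_smul, zero_add]
  have hρ_add_left : ∀ u v (y : X), rho smul (u + v) y = rho smul u y + rho smul v y := by
    intro u v y
    simp only [rho, fst'_add, snd'_add, _root_.add_smul, add_smul]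
    abel
  have hρ_sub_left : ∀ u v (y : X), rho smul (u - v) y = rho smul u y - rho smul v y := by
    intro u v y
    simp only [rho, fst'_sub, snd'_sub, _root_.sub_smul, hsub_smul]
    abel
  have hρ_sub_right : ∀ u (y y' : X), rho smul u (y - y') = rho smul u y - rho smul u y' := by
    intro u y y'
    simp only [rho, smul_sub, hsmul_sub]
    abel
  have hρ_smulc : ∀ (z : ℂ) u (y : X), rho smul (z • u) y = z • rho smul u y := by
    intro z u y
    simp only [rho, fst'_smul, snd'_smul, ← smul_smul, smul_comm z (snd' u) y,
      _root_.smul_add]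
  have hρ_mul : ∀ u v (y : X), rho smul (u * v) y = rho smul u (rho smul v y) := by
    intro u v y
    simp only [rho, fst'_mul, snd'_mul, add_smul, smul_comm, mul_smul, _root_.smul_add,
      smul_add, hlin, ← smul_smul]
    abel
  have hρ_norm : ∀ u (y : X), ‖rho smul u y‖ ≤ ‖u‖ * ‖y‖ := by
    intro u y
    simp only [rho]
    refine (norm_add_le _ _).trans ?_
    rw [norm_U, norm_smul]
    have h := norm_smul_le (snd' u) y
    nlinarith [norm_nonneg (fst' u), norm_nonneg (snd' u), norm_nonneg y]
  -- the recursive construction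
  have hstep := fun (n : ℕ) (B : (WithLp 1 (Unitization ℂ A))ˣ)
      (hB : fst' (↑B : WithLp 1 (Unitization ℂ A)) = (((3:ℝ)/4 : ℝ) : ℂ) ^ n) =>
    step_ex smul norm_smul_le l e he hcai x (hmod x) hρ_one hρ_mul hρ_add_left hρ_sub_left
      hρ_sub_right hρ_smulc hρ_norm hρ_ι n B hB
  let T : ℕ → Type _ := fun n =>
    {B : (WithLp 1 (Unitization ℂ A))ˣ //
      fst' (↑B : WithLp 1 (Unitization ℂ A)) = (((3:ℝ)/4 : ℝ) : ℂ) ^ n}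
  let step : (n : ℕ) → T n → T (n+1) := fun n B =>
    ⟨(hstep n B.1 B.2).choose, (hstep n B.1 B.2).choose_spec.1⟩
  let F : (n : ℕ) → T n := fun n =>
    Nat.rec (motive := T) ⟨1, by rw [pow_zero]; exact fst'_one⟩ step n
  let b : ℕ → WithLp 1 (Unitization ℂ A) := fun n => ↑(F n).1
  let xs : ℕ → X := fun n => rho smul (↑(F n).1⁻¹ : WithLp 1 (Unitization ℂ A)) x
  let as : ℕ → A := fun n => snd' (b n)
  have hbd : ∀ n, ‖b (n+1) - b n‖ ≤ ((3:ℝ)/4) ^ n := fun n =>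
    (hstep n (F n).1 (F n).2).choose_spec.2.1
  have hxd : ∀ n, ‖xs (n+1) - xs n‖ ≤ ((2:ℝ)⁻¹) ^ n := fun n =>
    (hstep n (F n).1 (F n).2).choose_spec.2.2
  have hfstb : ∀ n, fst' (b n) = (((3:ℝ)/4 : ℝ) : ℂ) ^ n := fun n => (F n).2
  have hasb : ∀ n, as n = snd' (b n) := fun n => rfl
  have hinv : ∀ n, x = rho smul (b n) (xs n) := by
    intro n
    show x = rho smul (↑(F n).1) (rho smul (↑(F n).1⁻¹ : WithLp 1 (Unitization ℂ A)) x)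
    rw [← hρ_mul, Units.mul_inv, hρ_one]
  clear_value F b xs as
  -- convergence of the algebra part
  have hacauchy : CauchySeq as := by
    apply cauchySeq_of_le_geometric ((3:ℝ)/4) 1 (by norm_num)
    intro n
    rw [dist_eq_norm, one_mul]
    have h1 : as n - as (n+1) = snd' (b n - b (n+1)) := by rw [hasb, hasb, snd'_sub]
    calc ‖as n - as (n+1)‖ = ‖snd' (b n - b (n+1))‖ := by rw [h1]
      _ = ‖snd' (-(b (n+1) - b n))‖ := by rw [neg_sub]
      _ = ‖snd' (b (n+1) - b n)‖ := by rw [snd'_neg, norm_neg]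
      _ ≤ ‖b (n+1) - b n‖ := norm_snd'_le _
      _ ≤ ((3:ℝ)/4) ^ n := hbd n
  obtain ⟨aLim, ha⟩ := cauchySeq_tendsto_of_complete hacauchy
  -- convergence of the module part
  have hxcauchy : CauchySeq xs := by
    apply cauchySeq_of_le_geometric ((2:ℝ)⁻¹) 1 (by norm_num)
    intro n
    rw [dist_eq_norm, one_mul, ← norm_neg, neg_sub]
    exact hxd n
  obtain ⟨x', hx'⟩ := cauchySeq_tendsto_of_complete hxcauchy
  have hsplit : ∀ n, rho smul (b n) (xs n)
      = (((3:ℝ)/4 : ℝ) : ℂ) ^ n • xs n + smul (as n) (xs n) := by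
    intro n
    simp only [rho]
    rw [hfstb, ← hasb]
  -- limit computations
  have hterm1 : Tendsto (fun n => (((3:ℝ)/4 : ℝ) : ℂ) ^ n • xs n) atTop (𝓝 0) := by
    have hg : Tendsto (fun n : ℕ => ((3:ℝ)/4) ^ n * ‖xs n‖) atTop (𝓝 0) := by
      have h1 : Tendsto (fun n : ℕ => ((3:ℝ)/4) ^ n) atTop (𝓝 0) :=
        tendsto_pow_atTop_nhds_zero_of_lt_one (by norm_num) (by norm_num)
      have h2 : Tendsto (fun n => ‖xs n‖) atTop (𝓝 ‖x'‖) := hx'.norm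
      simpa using h1.mul h2
    apply squeeze_zero_norm _ hg
    intro n
    rw [norm_smul, norm_pow, Complex.norm_real, Real.norm_eq_abs,
      abs_of_pos (by norm_num : (0:ℝ) < 3/4)]
  have hterm2 : Tendsto (fun n => smul (as n) (xs n)) atTop (𝓝 (smul aLim x')) := by
    rw [tendsto_iff_norm_sub_tendsto_zero]
    have hg : Tendsto (fun n => ‖as n - aLim‖ * ‖xs n‖ + ‖aLim‖ * ‖xs n - x'‖) atTop (𝓝 0) := by
      have l1 : Tendsto (fun n => ‖as n - aLim‖) atTop (𝓝 0) :=
        tendsto_iff_norm_sub_tendsto_zero.mp ha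
      have l2 : Tendsto (fun n => ‖xs n - x'‖) atTop (𝓝 0) :=
        tendsto_iff_norm_sub_tendsto_zero.mp hx'
      have h3 := (l1.mul hx'.norm).add (l2.const_mul ‖aLim‖)
      simpa [mul_comm] using h3
    apply squeeze_zero (fun n => norm_nonneg _) _ hg
    · intro n
      have hsplit2 : smul (as n) (xs n) - smul aLim x'
          = smul (as n - aLim) (xs n) + smul aLim (xs n - x') := by
        rw [hsub_smul, hsmul_sub]; abel
      rw [hsplit2]
      exact (norm_add_le _ _).trans (add_le_add (norm_smul_le _ _) (norm_smul_le _ _))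
  have hfinal : Tendsto (fun n => rho smul (b n) (xs n)) atTop (𝓝 (smul aLim x')) := by
    have h := hterm1.add hterm2
    rw [zero_add] at h
    exact h.congr fun n => (hsplit n).symm
  exact ⟨aLim, x', tendsto_nhds_unique (tendsto_const_nhds.congr fun n => hinv n) hfinal⟩
end

section
/- Let A be a closed subalgebra of a C*-algebra E such that A generates E as a C*-algebra, and suppose A has a contractive approximate identity (e_α). Then (e_α) is also an approximate identity for E; that is, e_α c → c and c e_α → c for every c ∈ E. -/
/-!
The set of `c` with `e_α c → c` and `c e_α → c` is closed, because the maps `c ↦ e_α c` and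
`c ↦ c e_α` are 1-Lipschitz, and it is clearly closed under sums, products and scalars. It is also
closed under `star`: for a contraction `x`, the C*-identity together with `x⋆x ≤ 1` gives
`‖xb - b‖² ≤ 2‖b⋆b - b⋆xb‖`, so `c e_α → c` forces `e_α c⋆ → c⋆`. It is therefore a closed
star subalgebra containing `A`, hence all of `E`.
-/

open Filter Topology

section ApproximateUnit

variable {E : Type*} [NonUnitalCStarAlgebra E]

theorem norm_mul_sub_self_sq_le {x : E} (hx : ‖x‖ ≤ 1) (b : E) :
    ‖x * b - b‖ ^ 2 ≤ 2 * ‖star b * b - star b * x * b‖ := by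
  let _ := CStarAlgebra.spectralOrder E
  let _ := CStarAlgebra.spectralOrderedRing E
  set d := star b * b - star b * x * b
  have hconj : star b * (star x * x) * b ≤ star b * b := calc
    _ ≤ ‖star x * x‖ • (star b * b) := CStarAlgebra.star_left_conjugate_le_norm_smul
    _ ≤ star b * b := smul_le_of_le_one_left (star_mul_self_nonneg b) <| by
      rw [CStarRing.norm_star_mul_self]; nlinarith [norm_nonneg x]
  have hle : star (x * b - b) * (x * b - b) ≤ d + star d := by
    rw [← sub_nonneg] at hconj ⊢
    convert hconj using 1
    simp only [d, star_sub, star_mul, star_star]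
    noncomm_ring
  calc ‖x * b - b‖ ^ 2 = ‖star (x * b - b) * (x * b - b)‖ := by
        rw [CStarRing.norm_star_mul_self, sq]
    _ ≤ ‖d + star d‖ := CStarAlgebra.norm_le_norm_of_nonneg_of_le (star_mul_self_nonneg _) hle
    _ ≤ 2 * ‖d‖ := by linarith [norm_add_le d (star d), norm_star d]

variable {ι : Type*} {l : Filter ι} {e : ι → E}

theorem tendsto_mul_star_of_tendsto_mul (he : ∀ i, ‖e i‖ ≤ 1) {c : E}
    (hc : Tendsto (fun i => c * e i) l (𝓝 c)) :
    Tendsto (fun i => e i * star c) l (𝓝 (star c)) := by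
  rw [tendsto_iff_norm_sub_tendsto_zero]
  have hbound : Tendsto (fun i => 2 * ‖c * star c - c * e i * star c‖) l (𝓝 0) := by
    simpa using ((hc.mul_const (star c)).const_sub (c * star c)).norm.const_mul 2
  have hsqrt := hbound.sqrt
  rw [Real.sqrt_zero] at hsqrt
  refine squeeze_zero (fun _ => norm_nonneg _) (fun i => Real.le_sqrt_of_sq_le ?_) hsqrt
  simpa using norm_mul_sub_self_sq_le (he i) (star c)

theorem tendsto_star_mul_of_tendsto_mul (he : ∀ i, ‖e i‖ ≤ 1) {c : E}
    (hc : Tendsto (fun i => e i * c) l (𝓝 c)) :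
    Tendsto (fun i => star c * e i) l (𝓝 (star c)) := by
  have h := tendsto_mul_star_of_tendsto_mul (e := fun i => star (e i)) (by simpa using he)
    (by simpa using hc.star)
  simpa using h.star

theorem isClosed_setOf_tendsto_mul_left (he : ∀ i, ‖e i‖ ≤ 1) :
    IsClosed {c : E | Tendsto (fun i => e i * c) l (𝓝 c)} :=
  (LipschitzWith.uniformEquicontinuous (fun i c => e i * c) 1 fun i =>
    (lipschitzWith_smul (e i)).weaken (by exact_mod_cast he i)).equicontinuous
    |>.isClosed_setOfPred_tendsto continuous_id

theorem isClosed_setOf_tendsto_mul_right (he : ∀ i, ‖e i‖ ≤ 1) :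
    IsClosed {c : E | Tendsto (fun i => c * e i) l (𝓝 c)} :=
  (LipschitzWith.uniformEquicontinuous (fun i c => c * e i) 1 fun i =>
    (lipschitzWith_smul (MulOpposite.op (e i)) (β := E)).weaken
      (by exact_mod_cast he i)).equicontinuous
    |>.isClosed_setOfPred_tendsto continuous_id

variable (l) in
def approxUnitStarSubalgebra (he : ∀ i, ‖e i‖ ≤ 1) : NonUnitalStarSubalgebra ℂ E where
  carrier := {c | Tendsto (fun i => e i * c) l (𝓝 c) ∧ Tendsto (fun i => c * e i) l (𝓝 c)}
  zero_mem' := by simp [tendsto_const_nhds]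
  add_mem' ha hb :=
    ⟨(ha.1.add hb.1).congr fun _ => (mul_add _ _ _).symm,
      (ha.2.add hb.2).congr fun _ => (add_mul _ _ _).symm⟩
  mul_mem' ha hb :=
    ⟨(ha.1.mul_const _).congr fun _ => mul_assoc _ _ _,
      (hb.2.const_mul _).congr fun _ => (mul_assoc _ _ _).symm⟩
  smul_mem' r _ hc :=
    ⟨(hc.1.const_smul r).congr fun _ => (mul_smul_comm _ _ _).symm,
      (hc.2.const_smul r).congr fun _ => (smul_mul_assoc _ _ _).symm⟩
  star_mem' hc :=
    ⟨tendsto_mul_star_of_tendsto_mul he hc.2, tendsto_star_mul_of_tendsto_mul he hc.1⟩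

theorem isClosed_approxUnitStarSubalgebra (he : ∀ i, ‖e i‖ ≤ 1) :
    IsClosed (approxUnitStarSubalgebra l he : Set E) :=
  (isClosed_setOf_tendsto_mul_left he).inter (isClosed_setOf_tendsto_mul_right he)

end ApproximateUnit

theorem cai_of_generating_subalgebra_is_ai_general
    {E : Type*} [NonUnitalCStarAlgebra E]
    (A : NonUnitalSubalgebra ℂ E)
    (hgen : closure (↑(NonUnitalStarAlgebra.adjoin ℂ (A : Set E)) : Set E) = Set.univ)
    {ι : Type*} (l : Filter ι) (e : ι → E)
    (he : ∀ i, ‖e i‖ ≤ 1)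
    (hcai_left : ∀ a ∈ A, Tendsto (fun i => e i * a) l (𝓝 a))
    (hcai_right : ∀ a ∈ A, Tendsto (fun i => a * e i) l (𝓝 a)) :
    ∀ c : E, Tendsto (fun i => e i * c) l (𝓝 c) ∧ Tendsto (fun i => c * e i) l (𝓝 c) := by
  have hA_sub : (A : Set E) ⊆ approxUnitStarSubalgebra l he := fun a ha =>
    ⟨hcai_left a ha, hcai_right a ha⟩
  have hclosure : closure (NonUnitalStarAlgebra.adjoin ℂ (A : Set E) : Set E) ⊆
      approxUnitStarSubalgebra l he :=
    closure_minimal (NonUnitalStarAlgebra.adjoin_le hA_sub) (isClosed_approxUnitStarSubalgebra he)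
  exact fun c => hclosure (hgen ▸ Set.mem_univ c)

/-- let `A` be a norm-closed subalgebra of a C*-algebra `E` which generates `E`
as a C*-algebra, and suppose `A` has a contractive approximate identity `(e_α)`.  Then
`(e_α)` is an approximate identity for `E`: `e_α c → c` and `c e_α → c` for every `c ∈ E`. -/
theorem cai_of_generating_subalgebra_is_ai
    {E : Type*} [NonUnitalCStarAlgebra E]
    (A : NonUnitalSubalgebra ℂ E) (hA : IsClosed (A : Set E))
    (hgen : closure (↑(NonUnitalStarAlgebra.adjoin ℂ (A : Set E)) : Set E) = Set.univ)
    {ι : Type*} (l : Filter ι) [l.NeBot] (e : ι → E)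
    (heA : ∀ i, e i ∈ A) (he : ∀ i, ‖e i‖ ≤ 1)
    (hcai_left : ∀ a ∈ A, Tendsto (fun i => e i * a) l (𝓝 a))
    (hcai_right : ∀ a ∈ A, Tendsto (fun i => a * e i) l (𝓝 a)) :
    ∀ c : E, Tendsto (fun i => e i * c) l (𝓝 c) ∧ Tendsto (fun i => c * e i) l (𝓝 c) :=
  cai_of_generating_subalgebra_is_ai_general A hgen l e he hcai_left hcai_right
end

section
/- Let A be a C*-algebra acting nondegenerately on a Hilbert space H, and let V be a Hilbert space which is a nondegenerate A-module via a *-representation π : A → B(V). Then the map v ↦ r_v, where r_v(a) = π(a)v, is a unitary isomorphism from V onto the space of bounded A-module maps from A to V (where A acts on itself by left multiplication), with inverse sending a module map T to the limit of T(e_α) for a contractive approximate identity (e_α) of A. -/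
open Filter Topology

/-- In a C⋆-algebra, a contractive left approximate identity is automatically a
right approximate identity. -/
lemma aux_right_ai_of_left {A : Type*} [NonUnitalCStarAlgebra A]
    {ι : Type*} {l : Filter ι} [l.NeBot] {e : ι → A}
    (he : ∀ i, ‖e i‖ ≤ 1)
    (hcai : ∀ a : A, Tendsto (fun i => e i * a) l (𝓝 a)) :
    ∀ a : A, Tendsto (fun i => a * e i) l (𝓝 a) := by
  intro a
  have key : ∀ i, ‖a * e i - a‖ ^ 2 ≤ 2 * (‖a‖ * ‖e i * star a - star a‖) := by
    intro i
    set B := Unitization ℂ A with hB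
    set f : B := 1 - (e i : B) with hf
    have hx : ((a * e i - a : A) : B) = -((a : B) * f) := by
      rw [hf, mul_sub, mul_one, ← Unitization.inr_mul, ← Unitization.inr_sub,
        ← Unitization.inr_neg, neg_sub]
    have halg : ∀ s : ℝ, 0 ≤ s → (0 : B) ≤ algebraMap ℝ B s := by
      intro s hs
      have hsa : star (algebraMap ℝ B (Real.sqrt s)) = algebraMap ℝ B (Real.sqrt s) := by
        simp [Algebra.algebraMap_eq_smul_one, star_smul]
      have h1 : algebraMap ℝ B s
          = star (algebraMap ℝ B (Real.sqrt s)) * algebraMap ℝ B (Real.sqrt s) := by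
        rw [hsa, ← map_mul, Real.mul_self_sqrt hs]
      rw [h1]
      exact star_mul_self_nonneg _
    have he1 : (e i : B) * star (e i : B) ≤ 1 := by
      refine le_trans CStarAlgebra.mul_star_le_algebraMap_norm_sq ?_
      have h1 : ‖(e i : B)‖ = ‖e i‖ := Unitization.norm_inr _
      have h2 : (0 : ℝ) ≤ 1 - ‖(e i : B)‖ ^ 2 := by nlinarith [he i, norm_nonneg (e i)]
      calc algebraMap ℝ B (‖(e i : B)‖ ^ 2) ≤ algebraMap ℝ B 1 := by
            rw [← sub_nonneg, ← map_sub]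
            exact halg _ h2
        _ = 1 := map_one _
    have hff : f * star f ≤ f + star f := by
      have h0 : f + star f - f * star f = 1 - (e i : B) * star (e i : B) := by
        rw [hf]
        rw [star_sub, star_one]
        change (1 - (e i : Unitization ℂ A)) + (1 - star (e i : Unitization ℂ A)) - (1 - (e i : Unitization ℂ A)) * (1 - star (e i : Unitization ℂ A)) = 1 - (e i : Unitization ℂ A) * star (e i : Unitization ℂ A)
        noncomm_ring
      have h1 : (0 : B) ≤ f + star f - f * star f := h0 ▸ sub_nonneg.mpr he1
      exact sub_nonneg.mp h1
    have hconj : (a : B) * (f * star f) * star (a : B) ≤ (a : B) * (f + star f) * star (a : B) :=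
      star_right_conjugate_le_conjugate hff _
    have hxsq : ‖a * e i - a‖ ^ 2 = ‖(a : B) * (f * star f) * star (a : B)‖ := by
      have h1 : ‖a * e i - a‖ = ‖(a : B) * f‖ := by
        rw [← Unitization.norm_inr (𝕜 := ℂ) (a * e i - a), hx, norm_neg]
      have h2 : (a : B) * (f * star f) * star (a : B)
          = ((a : B) * f) * star ((a : B) * f) := by
        simp only [star_mul]
        noncomm_ring
      rw [h1, sq, ← CStarRing.norm_self_mul_star, h2]
    have hpos : (0 : B) ≤ (a : B) * (f * star f) * star (a : B) := by
      have h2 : (a : B) * (f * star f) * star (a : B)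
          = ((a : B) * f) * star ((a : B) * f) := by
        simp only [star_mul]; noncomm_ring
      rw [h2]
      exact mul_star_self_nonneg _
    have h2 : ‖(a : B) * (f * star f) * star (a : B)‖
        ≤ ‖(a : B) * (f + star f) * star (a : B)‖ :=
      CStarAlgebra.norm_le_norm_of_nonneg_of_le hpos hconj
    have key3 : (a : B) * (f + star f) * star (a : B)
        = (a : B) * f * star (a : B) + star ((a : B) * f * star (a : B)) := by
      simp only [star_mul, star_star]
      noncomm_ring
    have key4 : ‖(a : B) * f * star (a : B)‖ ≤ ‖a‖ * ‖e i * star a - star a‖ := by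
      have h4 : f * star (a : B) = -(((e i * star a - star a : A)) : B) := by
        rw [hf, sub_mul, one_mul, ← Unitization.inr_star, ← Unitization.inr_mul,
          ← Unitization.inr_sub, ← Unitization.inr_neg, neg_sub]
      calc ‖(a : B) * f * star (a : B)‖ = ‖(a : B) * (f * star (a : B))‖ := by rw [mul_assoc]
        _ ≤ ‖(a : B)‖ * ‖f * star (a : B)‖ := norm_mul_le _ _
        _ = ‖a‖ * ‖e i * star a - star a‖ := by
            rw [h4, norm_neg, Unitization.norm_inr, Unitization.norm_inr]
    calc ‖a * e i - a‖ ^ 2 = ‖(a : B) * (f * star f) * star (a : B)‖ := hxsq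
      _ ≤ ‖(a : B) * (f + star f) * star (a : B)‖ := h2
      _ = ‖(a : B) * f * star (a : B) + star ((a : B) * f * star (a : B))‖ := by rw [key3]
      _ ≤ ‖(a : B) * f * star (a : B)‖ + ‖star ((a : B) * f * star (a : B))‖ := norm_add_le _ _
      _ = 2 * ‖(a : B) * f * star (a : B)‖ := by rw [norm_star]; ring
      _ ≤ 2 * (‖a‖ * ‖e i * star a - star a‖) := by
          have := key4; nlinarith [norm_nonneg ((a : B) * f * star (a : B))]
  have hlim : Tendsto (fun i => 2 * (‖a‖ * ‖e i * star a - star a‖)) l (𝓝 0) := by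
    have h1 : Tendsto (fun i => e i * star a - star a) l (𝓝 0) := by
      simpa using (hcai (star a)).sub (tendsto_const_nhds (x := star a))
    have h2 : Tendsto (fun i => ‖e i * star a - star a‖) l (𝓝 0) := by
      simpa using h1.norm
    have := (h2.const_mul ‖a‖).const_mul 2
    simpa using this
  have hsq : Tendsto (fun i => ‖a * e i - a‖ ^ 2) l (𝓝 0) :=
    squeeze_zero (fun i => sq_nonneg _) key hlim
  have hnorm : Tendsto (fun i => ‖a * e i - a‖) l (𝓝 0) := by
    have h1 := hsq.sqrt
    simp only [Real.sqrt_zero] at h1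
    refine h1.congr fun i => ?_
    exact Real.sqrt_sq (norm_nonneg _)
  rw [tendsto_iff_norm_sub_tendsto_zero]
  exact hnorm

/-- let `A` be a C*-algebra acting nondegenerately on a Hilbert space `H`,
and `V` a Hilbert space with a nondegenerate *-representation `π : A → B(V)`.  Then
`v ↦ r_v`, with `r_v(a) = π(a)v`, is a unitary (i.e. isometric surjective linear)
isomorphism from `V` onto the bounded `A`-module maps `A → V`, whose inverse sends a
module map `T` to `lim_α T(e_α)` for a contractive approximate identity `(e_α)` of `A`. -/
theorem hilbert_module_maps_unitary
    {A : Type*} [NonUnitalCStarAlgebra A]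
    {H V : Type*} [NormedAddCommGroup H] [InnerProductSpace ℂ H] [CompleteSpace H]
    [NormedAddCommGroup V] [InnerProductSpace ℂ V] [CompleteSpace V]
    (ρ : A →⋆ₙₐ[ℂ] (H →L[ℂ] H))
    (hρ : closure (↑(Submodule.span ℂ {x : H | ∃ a ξ, x = ρ a ξ}) : Set H) = Set.univ)
    (π : A →⋆ₙₐ[ℂ] (V →L[ℂ] V))
    (hπ : closure (↑(Submodule.span ℂ {x : V | ∃ a v, x = π a v}) : Set V) = Set.univ)
    -- a contractive approximate identity for `A`
    {ι : Type*} (l : Filter ι) [l.NeBot] (e : ι → A)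
    (he : ∀ i, ‖e i‖ ≤ 1)
    (hcai : ∀ a : A, Tendsto (fun i => e i * a) l (𝓝 a)) :
    -- `v ↦ r_v` lands in the bounded `A`-module maps and is isometric:
    (∀ v : V, ∃ R : A →L[ℂ] V,
      (∀ a, R a = π a v) ∧ (∀ a b, R (a * b) = π a (R b)) ∧ ‖R‖ = ‖v‖) ∧
    -- it is injective:
    (∀ v w : V, (∀ a, π a v = π a w) → v = w) ∧
    -- and surjective, with inverse `T ↦ lim_α T(e_α)`:
    (∀ T : A →L[ℂ] V, (∀ a b, T (a * b) = π a (T b)) →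
      ∃ v : V, (∀ a, T a = π a v) ∧ ‖T‖ = ‖v‖ ∧
        Tendsto (fun i => T (e i)) l (𝓝 v)) := by
  classical
  have hc : ∀ a : A, ‖π a‖ ≤ ‖a‖ := fun a => NonUnitalStarAlgHom.norm_apply_le π a
  have hcai' : ∀ a : A, Tendsto (fun i => a * e i) l (𝓝 a) := aux_right_ai_of_left he hcai
  -- nondegeneracy: `π (e i) v → v` for every `v`
  have hnd : ∀ v : V, Tendsto (fun i => π (e i) v) l (𝓝 v) := by
    have hspan : ∀ v ∈ Submodule.span ℂ {x : V | ∃ a u, x = π a u},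
        Tendsto (fun i => π (e i) v) l (𝓝 v) := by
      intro v hv
      induction hv using Submodule.span_induction with
      | mem x hx =>
        obtain ⟨a, u, rfl⟩ := hx
        have h1 : Tendsto (fun i => π (e i * a) u) l (𝓝 (π a u)) := by
          rw [tendsto_iff_norm_sub_tendsto_zero]
          refine squeeze_zero (g := fun i => ‖e i * a - a‖ * ‖u‖) (fun i => norm_nonneg _) (fun i => ?_) ?_
          · show ‖π (e i * a) u - π a u‖ ≤ ‖e i * a - a‖ * ‖u‖
            have h2 : π (e i * a) u - π a u = π (e i * a - a) u := by
              rw [map_sub, ContinuousLinearMap.sub_apply]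
            rw [h2]
            calc ‖π (e i * a - a) u‖ ≤ ‖π (e i * a - a)‖ * ‖u‖ := (π _).le_opNorm u
              _ ≤ ‖e i * a - a‖ * ‖u‖ :=
                  mul_le_mul_of_nonneg_right (hc _) (norm_nonneg u)
          · have h3 : Tendsto (fun i => ‖e i * a - a‖) l (𝓝 0) := by
              simpa using ((hcai a).sub (tendsto_const_nhds (x := a))).norm
            simpa using h3.mul_const ‖u‖
        refine h1.congr fun i => ?_
        rw [map_mul]; rfl
      | zero => simpa using (tendsto_const_nhds : Tendsto (fun _ : ι => (0 : V)) l (𝓝 0))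
      | add x y hx hy ihx ihy => simpa using ihx.add ihy
      | smul z x hx ih => simpa using ih.const_smul z
    intro v
    rw [Metric.tendsto_nhds]
    intro ε hε
    have hv : v ∈ closure ((Submodule.span ℂ {x : V | ∃ a u, x = π a u} : Submodule ℂ V) : Set V) := by
      rw [hπ]; trivial
    obtain ⟨w, hw, hwv⟩ := Metric.mem_closure_iff.mp hv (ε / 3) (by linarith)
    have hw' := Metric.tendsto_nhds.mp (hspan w hw) (ε / 3) (by linarith)
    filter_upwards [hw'] with i hi
    have hb : dist (π (e i) v) (π (e i) w) ≤ dist v w := by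
      rw [dist_eq_norm, ← map_sub]
      calc ‖π (e i) (v - w)‖ ≤ ‖π (e i)‖ * ‖v - w‖ := (π _).le_opNorm _
        _ ≤ 1 * ‖v - w‖ :=
            mul_le_mul_of_nonneg_right ((hc _).trans (he i)) (norm_nonneg _)
        _ = dist v w := by rw [one_mul, dist_eq_norm]
    calc dist (π (e i) v) v
        ≤ dist (π (e i) v) (π (e i) w) + dist (π (e i) w) w + dist w v := dist_triangle4 _ _ _ _
      _ < ε / 3 + ε / 3 + ε / 3 := by
          have h5 : dist (π (e i) v) (π (e i) w) < ε / 3 := hb.trans_lt hwv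
          have h6 : dist w v < ε / 3 := by rwa [dist_comm]
          linarith
      _ = ε := by ring
  -- Part 1
  have part1 : ∀ v : V, ∃ R : A →L[ℂ] V,
      (∀ a, R a = π a v) ∧ (∀ a b, R (a * b) = π a (R b)) ∧ ‖R‖ = ‖v‖ := by
    intro v
    let L : A →ₗ[ℂ] V :=
      { toFun := fun a => π a v
        map_add' := fun a b => by simp [map_add]
        map_smul' := fun z a => by simp [map_smul] }
    have hb : ∀ a, ‖L a‖ ≤ ‖v‖ * ‖a‖ := fun a => by
      calc ‖π a v‖ ≤ ‖π a‖ * ‖v‖ := (π a).le_opNorm v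
        _ ≤ ‖a‖ * ‖v‖ := mul_le_mul_of_nonneg_right (hc a) (norm_nonneg v)
        _ = ‖v‖ * ‖a‖ := mul_comm _ _
    let R : A →L[ℂ] V := L.mkContinuous ‖v‖ hb
    have hRa : ∀ a, R a = π a v := fun a => rfl
    refine ⟨R, hRa, fun a b => by rw [hRa, hRa, map_mul]; rfl,
      le_antisymm (L.mkContinuous_norm_le (norm_nonneg v) hb) ?_⟩
    have h1 : Tendsto (fun i => ‖π (e i) v‖) l (𝓝 ‖v‖) := (hnd v).norm
    refine le_of_tendsto h1 (Eventually.of_forall fun i => ?_)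
    calc ‖π (e i) v‖ = ‖R (e i)‖ := by rw [hRa]
      _ ≤ ‖R‖ * ‖e i‖ := R.le_opNorm _
      _ ≤ ‖R‖ * 1 := mul_le_mul_of_nonneg_left (he i) (norm_nonneg R)
      _ = ‖R‖ := mul_one _
  -- Part 2
  have part2 : ∀ v w : V, (∀ a, π a v = π a w) → v = w := by
    intro v w h
    have h1 := hnd v
    simp only [h] at h1
    exact tendsto_nhds_unique h1 (hnd w)
  refine ⟨part1, part2, fun T hT => ?_⟩
  -- Part 3
  have hTe : ∀ i, ‖T (e i)‖ ≤ ‖T‖ := fun i =>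
    (T.le_opNorm (e i)).trans (mul_le_of_le_one_right (norm_nonneg T) (he i))
  have hadj : ∀ a : A, ContinuousLinearMap.adjoint (π a) = π (star a) := fun a => by
    rw [← ContinuousLinearMap.star_eq_adjoint, ← map_star]
  have hspanlim : ∀ u ∈ Submodule.span ℂ {x : V | ∃ a w, x = π a w},
      ∃ c : ℂ, Tendsto (fun i => (inner ℂ (T (e i)) u : ℂ)) l (𝓝 c) := by
    intro u hu
    induction hu using Submodule.span_induction with
    | mem x hx =>
      obtain ⟨a, w, rfl⟩ := hx
      refine ⟨inner ℂ (T (star a)) w, ?_⟩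
      have h1 : ∀ i, (inner ℂ (T (e i)) (π a w) : ℂ) = inner ℂ (T (star a * e i)) w := by
        intro i
        rw [← ContinuousLinearMap.adjoint_inner_left, hadj, ← hT]
      simp only [h1]
      have h2 : Tendsto (fun i => T (star a * e i)) l (𝓝 (T (star a))) :=
        (T.continuous.tendsto _).comp (hcai' (star a))
      exact h2.inner tendsto_const_nhds
    | zero => exact ⟨0, by simpa using (tendsto_const_nhds : Tendsto (fun _ : ι => (0 : ℂ)) l _)⟩
    | add x y hx hy ihx ihy =>
      obtain ⟨c1, h1⟩ := ihx
      obtain ⟨c2, h2⟩ := ihy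
      exact ⟨c1 + c2, by simpa [inner_add_right] using h1.add h2⟩
    | smul z x hx ih =>
      obtain ⟨c, h⟩ := ih
      exact ⟨z * c, by simpa [inner_smul_right] using h.const_mul z⟩
  have hlim : ∀ u : V, ∃ c : ℂ, Tendsto (fun i => (inner ℂ (T (e i)) u : ℂ)) l (𝓝 c) := by
    intro u
    have hcauchy : Cauchy (map (fun i => (inner ℂ (T (e i)) u : ℂ)) l) := by
      rw [Metric.cauchy_iff]
      refine ⟨map_neBot, fun ε hε => ?_⟩
      have hu : u ∈ closure ((Submodule.span ℂ {x : V | ∃ a w, x = π a w} : Submodule ℂ V) : Set V) := by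
        rw [hπ]; trivial
      have hd : (0 : ℝ) < ε / (3 * (‖T‖ + 1)) := by positivity
      obtain ⟨w, hw, hwu⟩ := Metric.mem_closure_iff.mp hu _ hd
      obtain ⟨c, hcw⟩ := hspanlim w hw
      refine ⟨Metric.ball c (ε / 2), ?_, fun x hx y hy => ?_⟩
      · rw [mem_map]
        have h1 := Metric.tendsto_nhds.mp hcw (ε / 12) (by linarith)
        filter_upwards [h1] with i hi
        have h2 : dist (inner ℂ (T (e i)) u : ℂ) (inner ℂ (T (e i)) w : ℂ) ≤ ‖T‖ * dist u w := by
          rw [dist_eq_norm, ← inner_sub_right]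
          calc ‖(inner ℂ (T (e i)) (u - w) : ℂ)‖ ≤ ‖T (e i)‖ * ‖u - w‖ := norm_inner_le_norm _ _
            _ ≤ ‖T‖ * ‖u - w‖ := mul_le_mul_of_nonneg_right (hTe i) (norm_nonneg _)
            _ = ‖T‖ * dist u w := by rw [dist_eq_norm]
        have h3 : ‖T‖ * dist u w < ε / 3 := by
          have hT1 : (0 : ℝ) < ‖T‖ + 1 := by positivity
          calc ‖T‖ * dist u w ≤ (‖T‖ + 1) * dist u w :=
                mul_le_mul_of_nonneg_right (by linarith) dist_nonneg
            _ < (‖T‖ + 1) * (ε / (3 * (‖T‖ + 1))) := by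
                exact mul_lt_mul_of_pos_left hwu hT1
            _ = ε / 3 := by field_simp
        have h4 : dist (inner ℂ (T (e i)) u : ℂ) c
            ≤ dist (inner ℂ (T (e i)) u : ℂ) (inner ℂ (T (e i)) w : ℂ)
              + dist (inner ℂ (T (e i)) w : ℂ) c := dist_triangle _ _ _
        have : dist (inner ℂ (T (e i)) u : ℂ) c < ε / 2 := by
          have := h2.trans h3.le
          calc dist (inner ℂ (T (e i)) u : ℂ) c
              ≤ ‖T‖ * dist u w + dist (inner ℂ (T (e i)) w : ℂ) c := by linarith [h4, h2]
            _ < ε / 3 + ε / 12 := add_lt_add_of_lt_of_lt h3 hi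
            _ < ε / 2 := by linarith
        exact Metric.mem_ball.mpr this
      · rw [Metric.mem_ball] at hx hy
        calc dist x y ≤ dist x c + dist c y := dist_triangle _ _ _
          _ = dist x c + dist y c := by rw [dist_comm c y]
          _ < ε / 2 + ε / 2 := add_lt_add hx hy
          _ = ε := by ring
    exact CompleteSpace.complete hcauchy
  choose cc hcc using hlim
  have hcadd : ∀ u w, cc (u + w) = cc u + cc w := fun u w =>
    tendsto_nhds_unique (hcc (u + w)) (by simpa [inner_add_right] using (hcc u).add (hcc w))
  have hcsmul : ∀ (z : ℂ) (u : V), cc (z • u) = z * cc u := fun z u =>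
    tendsto_nhds_unique (hcc (z • u)) (by simpa [inner_smul_right] using (hcc u).const_mul z)
  have hcbound : ∀ u, ‖cc u‖ ≤ ‖T‖ * ‖u‖ := fun u =>
    le_of_tendsto (hcc u).norm (Eventually.of_forall fun i =>
      (norm_inner_le_norm _ _).trans (mul_le_mul_of_nonneg_right (hTe i) (norm_nonneg u)))
  let L : V →ₗ[ℂ] ℂ :=
    { toFun := cc
      map_add' := hcadd
      map_smul' := fun z u => by simpa using hcsmul z u }
  let f : V →L[ℂ] ℂ := L.mkContinuous ‖T‖ hcbound
  let v : V := (InnerProductSpace.toDual ℂ V).symm f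
  have hvinner : ∀ u, (inner ℂ v u : ℂ) = cc u := fun u =>
    InnerProductSpace.toDual_symm_apply
  have hTv : ∀ a, T a = π a v := by
    intro a
    refine ext_inner_right ℂ fun u => ?_
    have h1 : (inner ℂ (π a v) u : ℂ) = cc (π (star a) u) := by
      rw [← hvinner]
      rw [← ContinuousLinearMap.adjoint_inner_left (π (star a)), hadj, star_star]
    have h2 : Tendsto (fun i => (inner ℂ (T (e i)) (π (star a) u) : ℂ)) l (𝓝 (inner ℂ (T a) u)) := by
      have he2 : ∀ i, (inner ℂ (T (e i)) (π (star a) u) : ℂ) = inner ℂ (T (a * e i)) u := by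
        intro i
        rw [← ContinuousLinearMap.adjoint_inner_left (π (star a)), hadj, star_star, ← hT]
      simp only [he2]
      exact ((T.continuous.tendsto _).comp (hcai' a)).inner tendsto_const_nhds
    have h3 : cc (π (star a) u) = inner ℂ (T a) u := tendsto_nhds_unique (hcc _) h2
    rw [h1, h3]
  obtain ⟨R, hRa, _, hRn⟩ := part1 v
  have hTR : T = R := ContinuousLinearMap.ext fun a => (hTv a).trans (hRa a).symm
  refine ⟨v, hTv, by rw [hTR, hRn], ?_⟩
  have := hnd v
  refine this.congr fun i => ?_
  exact (hTv (e i)).symm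
end

section
/- Let L be a C*-algebra with contractive approximate identity acting on a Hilbert space, and let M ⊆ L be a closed subalgebra with contractive approximate identity such that L·M ⊆ M and M·L ⊆ L (closed linear spans). Then L = M. -/
open Filter Topology

/-- Auxiliary: a family of contractions acting as a left approximate identity on a set whose
closed span is everything is a left approximate identity for the whole algebra. -/
lemma bai_of_dense_span {L : Type*} [NonUnitalCStarAlgebra L] {κ : Type*} {k : Filter κ}
    (g : κ → L) (hg : ∀ j, ‖g j‖ ≤ 1) {s : Set L}
    (hs : ∀ y ∈ s, Tendsto (fun j => g j * y) k (𝓝 y))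
    (hdense : closure (↑(Submodule.span ℂ s) : Set L) = Set.univ) (y : L) :
    Tendsto (fun j => g j * y) k (𝓝 y) := by
  have hspan : ∀ z ∈ Submodule.span ℂ s, Tendsto (fun j => g j * z) k (𝓝 z) := by
    intro z hz
    induction hz using Submodule.span_induction with
    | mem x hx => exact hs x hx
    | zero => simpa using (tendsto_const_nhds : Tendsto (fun _ : κ => (0 : L)) k _)
    | add x y _ _ hx hy => simpa [mul_add] using hx.add hy
    | smul c x _ hx => simpa [mul_smul_comm] using hx.const_smul c
  rw [Metric.tendsto_nhds]
  intro ε hε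
  have hy : y ∈ closure (↑(Submodule.span ℂ s) : Set L) := by rw [hdense]; trivial
  obtain ⟨z, hz, hzy⟩ := Metric.mem_closure_iff.mp hy (ε / 3) (by linarith)
  filter_upwards [Metric.tendsto_nhds.mp (hspan z hz) (ε / 3) (by linarith)] with j hj
  have h1 : dist (g j * y) (g j * z) ≤ dist y z := by
    rw [dist_eq_norm, dist_eq_norm, ← mul_sub]
    calc ‖g j * (y - z)‖ ≤ ‖g j‖ * ‖y - z‖ := norm_mul_le _ _
      _ ≤ 1 * ‖y - z‖ := mul_le_mul_of_nonneg_right (hg j) (norm_nonneg _)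
      _ = ‖y - z‖ := one_mul _
  calc dist (g j * y) y ≤ dist (g j * y) (g j * z) + dist (g j * z) z + dist z y :=
        dist_triangle4 _ _ _ _
    _ < ε / 3 + ε / 3 + ε / 3 :=
        add_lt_add (add_lt_add_of_le_of_lt (h1.trans hzy.le) hj) (dist_comm z y ▸ hzy)
    _ = ε := by ring

/-- the absorption argument of Blecher–Muhly–Paulsen, Thm 4.15: let `L` be a
C*-algebra with contractive approximate identity, acting on a Hilbert space, and `M ⊆ L` a
closed subalgebra with its own contractive approximate identity such that (closed linear
spans) `L·M = M` and `M·L = L`.  Then `L = M`. -/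
theorem absorption_gives_equality
    {L : Type*} [NonUnitalCStarAlgebra L]
    -- `L` acts on a Hilbert space `H` (a faithful representation)
    {H : Type*} [NormedAddCommGroup H] [InnerProductSpace ℂ H] [CompleteSpace H]
    (ρ : L →⋆ₙₐ[ℂ] (H →L[ℂ] H)) (hρ : Function.Injective ρ)
    -- a contractive approximate identity for `L`
    {ι : Type*} (l : Filter ι) [l.NeBot] (e : ι → L) (he : ∀ i, ‖e i‖ ≤ 1)
    (hcai₁ : ∀ a : L, Tendsto (fun i => e i * a) l (𝓝 a))
    (hcai₂ : ∀ a : L, Tendsto (fun i => a * e i) l (𝓝 a))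
    -- the closed subalgebra `M`, with a contractive approximate identity of its own
    (M : NonUnitalSubalgebra ℂ L) (hM : IsClosed (M : Set L))
    {κ : Type*} (k : Filter κ) [k.NeBot] (f : κ → L)
    (hfM : ∀ j, f j ∈ M) (hf : ∀ j, ‖f j‖ ≤ 1)
    (hMcai₁ : ∀ m ∈ M, Tendsto (fun j => f j * m) k (𝓝 m))
    (hMcai₂ : ∀ m ∈ M, Tendsto (fun j => m * f j) k (𝓝 m))
    -- the absorption conditions `L·M = M` and `M·L = L` (closed linear spans)
    (hLM : closure (↑(Submodule.span ℂ {x : L | ∃ (a : L), ∃ m ∈ M, x = a * m}) : Set L)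
      = (M : Set L))
    (hML : closure (↑(Submodule.span ℂ {x : L | ∃ m ∈ M, ∃ (a : L), x = m * a}) : Set L)
      = Set.univ) :
    ∀ x : L, x ∈ M := by
  -- Step 1: `f j` is a left approximate identity for all of `L`.
  have step1 : ∀ y : L, Tendsto (fun j => f j * y) k (𝓝 y) := by
    refine bai_of_dense_span f hf ?_ hML
    rintro y ⟨m, hm, a, rfl⟩
    simpa [mul_assoc] using (hMcai₁ m hm).mul_const a
  -- Step 2: `star (f j) * m → m` for `m ∈ M`, by a C*-estimate in the unitization.
  have step2 : ∀ m ∈ M, Tendsto (fun j => star (f j) * m) k (𝓝 m) := by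
    intro m hm
    rw [tendsto_iff_norm_sub_tendsto_zero]
    set C : κ → L := fun j =>
      (star m * m + star m * m - star m * (f j * m)) - star (star m * (f j * m)) with hCdef
    have h1 : Tendsto (fun j => star m * (f j * m)) k (𝓝 (star m * m)) :=
      (hMcai₁ m hm).const_mul _
    have h2 : Tendsto (fun j => star (star m * (f j * m))) k (𝓝 (star m * m)) := by
      have := h1.star
      simpa [star_mul, mul_assoc] using this
    have hC : Tendsto C k (𝓝 0) := by
      have h0 : Tendsto (fun _ : κ => star m * m + star m * m) k
          (𝓝 (star m * m + star m * m)) := tendsto_const_nhds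
      have h3 := (h0.sub h1).sub h2
      rw [hCdef]
      simpa only [add_sub_cancel_right, sub_self] using h3
    have hbound : ∀ j, ‖star (f j) * m - m‖ ≤ Real.sqrt ‖C j‖ := by
      intro j
      set U := Unitization ℂ L
      letI : PartialOrder U := CStarAlgebra.spectralOrder U
      haveI : StarOrderedRing U := CStarAlgebra.spectralOrderedRing U
      set B : L := m - star (f j) * m with hBdef
      set A : U := (B : U) with hAdef
      set m' : U := (m : U) with hm'def
      set f' : U := ((f j : L) : U) with hf'def
      have hff : f' * star f' ≤ 1 := by
        rw [← CStarAlgebra.norm_le_one_iff_of_nonneg _ (mul_star_self_nonneg f')]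
        have hf1 : ‖f'‖ ≤ 1 := by rw [hf'def, Unitization.norm_inr]; exact hf j
        calc ‖f' * star f'‖ ≤ ‖f'‖ * ‖star f'‖ := norm_mul_le _ _
          _ ≤ 1 * 1 := mul_le_mul hf1 (by rw [hf'def, ← Unitization.inr_star, Unitization.norm_inr, norm_star]; exact hf j)
                (norm_nonneg _) zero_le_one
          _ = 1 := one_mul 1
      have hconj : (0 : U) ≤ star m' * ((1 : U) - f' * star f') * m' :=
        star_left_conjugate_nonneg (by rwa [sub_nonneg]) _
      have hkey : ((C j : L) : U) = star A * A + star m' * ((1 : U) - f' * star f') * m' := by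
        rw [hCdef, hAdef, hBdef, hm'def, hf'def]
        push_cast [Unitization.inr_sub, Unitization.inr_add, Unitization.inr_mul,
          Unitization.inr_star]
        simp only [Unitization.inr_sub, Unitization.inr_add, Unitization.inr_mul,
          Unitization.inr_star, star_sub, star_mul, star_star]
        rw [star_sub (R := Unitization ℂ L), star_mul (R := Unitization ℂ L), star_star (R := Unitization ℂ L)]
        simp only [mul_sub, sub_mul, mul_assoc, one_mul, mul_one]
        abel
      have hAA : (star A * A : U) ≤ ((C j : L) : U) := by
        rw [hkey]; exact le_add_of_nonneg_right hconj
      have hnorm : ‖star A * A‖ ≤ ‖C j‖ := by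
        have := CStarAlgebra.norm_le_norm_of_nonneg_of_le (star_mul_self_nonneg A) hAA
        rwa [Unitization.norm_inr] at this
      have hB2 : ‖B‖ ^ 2 ≤ ‖C j‖ := by
        calc ‖B‖ ^ 2 = ‖A‖ * ‖A‖ := by rw [pow_two, hAdef, Unitization.norm_inr]
          _ = ‖star A * A‖ := (CStarRing.norm_star_mul_self).symm
          _ ≤ ‖C j‖ := hnorm
      calc ‖star (f j) * m - m‖ = ‖B‖ := by rw [hBdef, norm_sub_rev]
        _ = Real.sqrt (‖B‖ ^ 2) := (Real.sqrt_sq (norm_nonneg _)).symm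
        _ ≤ Real.sqrt ‖C j‖ := Real.sqrt_le_sqrt hB2
    have hsqrt : Tendsto (fun j => Real.sqrt ‖C j‖) k (𝓝 0) := by
      have h0 : Tendsto (fun j => ‖C j‖) k (𝓝 0) := by simpa using hC.norm
      have := (Real.continuous_sqrt.tendsto 0).comp h0
      simpa [Function.comp_def] using this
    exact squeeze_zero (fun j => norm_nonneg _) hbound hsqrt
  -- Step 3: `star (f j)` is a left approximate identity for all of `L`.
  have step3 : ∀ y : L, Tendsto (fun j => star (f j) * y) k (𝓝 y) := by
    refine bai_of_dense_span (fun j => star (f j)) (fun j => by simpa [norm_star] using hf j)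
      ?_ hML
    rintro y ⟨m, hm, a, rfl⟩
    simpa [mul_assoc] using (step2 m hm).mul_const a
  -- Step 4: `x * f j → x` in norm, for every `x ∈ L`.
  have step4 : ∀ x : L, Tendsto (fun j => x * f j) k (𝓝 x) := by
    intro x
    have := (step3 (star x)).star
    simpa [star_mul, star_star] using this
  -- Step 5: `x * f j ∈ M` and `M` is closed.
  intro x
  have hmem : ∀ j, x * f j ∈ M := by
    intro j
    have : x * f j ∈ closure
        (↑(Submodule.span ℂ {x : L | ∃ (a : L), ∃ m ∈ M, x = a * m}) : Set L) :=
      subset_closure (Submodule.subset_span ⟨x, f j, hfM j, rfl⟩)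
    rwa [hLM] at this
  exact hM.mem_of_tendsto (step4 x) (Eventually.of_forall hmem)
end

section
/- Let A and B be unital rings, F : A-Mod → B-Mod and G : B-Mod → A-Mod an adjoint equivalence of the module categories with F and G additive. Set Y = F(A) and X = G(B). Then Y is naturally a (B,A)-bimodule (the right A-action coming from applying F to right multiplications r_a : A → A), X is naturally an (A,B)-bimodule, and there are bimodule isomorphisms X ⊗_B Y ≅ A and Y ⊗_A X ≅ B; moreover F is naturally isomorphic to Y ⊗_A (-). -/
open CategoryTheory

/-- A Morita context between unital rings `A` and `B` with surjective pairings: bimodules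
`X` (an `(A,B)`-bimodule) and `Y` (a `(B,A)`-bimodule) together with balanced bimodule
pairings implementing bimodule isomorphisms `X ⊗_B Y ≅ A` and `Y ⊗_A X ≅ B`. -/
structure MoritaData (A B X Y : Type*) [Ring A] [Ring B]
    [AddCommGroup X] [AddCommGroup Y] [Module A X] [Module B Y] where
  xr : X → B → X
  yr : Y → A → Y
  xr_add : ∀ x x' b, xr (x + x') b = xr x b + xr x' b
  xr_add' : ∀ x b b', xr x (b + b') = xr x b + xr x b'
  xr_mul : ∀ x b b', xr x (b * b') = xr (xr x b) b'
  xr_one : ∀ x, xr x 1 = x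
  xr_smul : ∀ (a : A) x b, xr (a • x) b = a • xr x b
  yr_add : ∀ y y' a, yr (y + y') a = yr y a + yr y' a
  yr_add' : ∀ y a a', yr y (a + a') = yr y a + yr y a'
  yr_mul : ∀ y a a', yr y (a * a') = yr (yr y a) a'
  yr_one : ∀ y, yr y 1 = y
  yr_smul : ∀ (b : B) y a, yr (b • y) a = b • yr y a
  τ : X → Y → A
  σ : Y → X → B
  τ_add : ∀ x x' y, τ (x + x') y = τ x y + τ x' y
  τ_add' : ∀ x y y', τ x (y + y') = τ x y + τ x y'
  τ_left : ∀ (a : A) x y, τ (a • x) y = a * τ x y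
  τ_right : ∀ x y (a : A), τ x (yr y a) = τ x y * a
  τ_balanced : ∀ x (b : B) y, τ (xr x b) y = τ x (b • y)
  σ_add : ∀ y y' x, σ (y + y') x = σ y x + σ y' x
  σ_add' : ∀ y x x', σ y (x + x') = σ y x + σ y x'
  σ_left : ∀ (b : B) y x, σ (b • y) x = b * σ y x
  σ_right : ∀ y x (b : B), σ y (xr x b) = σ y x * b
  σ_balanced : ∀ y (a : A) x, σ (yr y a) x = σ y (a • x)
  assoc₁ : ∀ x y x', τ x y • x' = xr x (σ y x')
  assoc₂ : ∀ y x y', σ y x • y' = yr y (τ x y')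
  τ_surj : AddSubgroup.closure {a : A | ∃ x y, a = τ x y} = ⊤
  σ_surj : AddSubgroup.closure {b : B | ∃ y x, b = σ y x} = ⊤

/-- The right multiplication `r_a : A → A`, `x ↦ x a`, as a left `A`-module map. -/
def rmul (A : Type u) [Ring A] (a : A) : ModuleCat.of A A ⟶ ModuleCat.of A A :=
  ModuleCat.ofHom
    { toFun := fun x => x * a
      map_add' := fun x y => add_mul x y a
      map_smul' := fun r x => by simp [smul_eq_mul, mul_assoc] }

/-- `F : A-Mod → B-Mod` "is the functor `Y ⊗_A (-)`": there is a family of balanced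
biadditive maps `β_V : Y × V → F(V)`, natural in `V`, compatible with the `B`-actions,
with the universal property of the balanced tensor product `Y ⊗_A V`. -/
def IsTensorFunctor (A B : Type u) [Ring A] [Ring B] (Y : Type u) [AddCommGroup Y]
    [Module B Y] (yr : Y → A → Y) (F : ModuleCat.{u} A ⥤ ModuleCat.{u} B) : Prop :=
  ∃ β : ∀ V : ModuleCat.{u} A, Y → V → F.obj V,
    (∀ (V : ModuleCat.{u} A) (y y' : Y) (v : V), β V (y + y') v = β V y v + β V y' v) ∧
    (∀ (V : ModuleCat.{u} A) (y : Y) (v v' : V), β V y (v + v') = β V y v + β V y v') ∧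
    (∀ (V : ModuleCat.{u} A) (y : Y) (a : A) (v : V), β V (yr y a) v = β V y (a • v)) ∧
    (∀ (V : ModuleCat.{u} A) (b : B) (y : Y) (v : V), β V (b • y) v = b • β V y v) ∧
    (∀ {V W : ModuleCat.{u} A} (f : V ⟶ W) (y : Y) (v : V),
      F.map f (β V y v) = β W y (f v)) ∧
    (∀ (V : ModuleCat.{u} A) (T : Type u) (_ : AddCommGroup T) (γ : Y → V → T),
      (∀ y y' v, γ (y + y') v = γ y v + γ y' v) →
      (∀ y v v', γ y (v + v') = γ y v + γ y v') →
      (∀ y a v, γ (yr y a) v = γ y (a • v)) →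
      ∃! h : F.obj V →+ T, ∀ y v, h (β V y v) = γ y v)

universe u

namespace MoritaAux

variable {R : Type u} [Ring R]

def lsmul (V : ModuleCat.{u} R) (v : V) : ModuleCat.of R R ⟶ V :=
  ModuleCat.ofHom (LinearMap.toSpanSingleton R V v)

@[simp] lemma lsmul_apply (V : ModuleCat.{u} R) (v : V) (a : R) : lsmul V v a = a • v := rfl

@[simp] lemma rmul_apply (a x : R) : rmul R a x = x * a := rfl

lemma lsmul_comp {V W : ModuleCat.{u} R} (f : V ⟶ W) (v : V) :
    lsmul V v ≫ f = lsmul W (f v) :=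
  ModuleCat.hom_ext (LinearMap.ext fun a => map_smul f.hom a v)

lemma rmul_comp_lsmul (V : ModuleCat.{u} R) (r : R) (v : V) :
    rmul R r ≫ lsmul V v = lsmul V (r • v) :=
  ModuleCat.hom_ext (LinearMap.ext fun a => mul_smul a r v)

lemma lsmul_add (V : ModuleCat.{u} R) (v v' : V) :
    lsmul V (v + v') = lsmul V v + lsmul V v' :=
  ModuleCat.hom_ext (LinearMap.ext fun a => smul_add (show R from a) v v')

lemma lsmul_ne_zero {V : ModuleCat.{u} R} {v : V} (h : v ≠ 0) : lsmul V v ≠ 0 := by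
  intro h0
  apply h
  have := congrArg (fun f : ModuleCat.of R R ⟶ V => f (1:R)) h0
  exact (one_smul R v).symm.trans this

lemma rmul_add (a a' : R) : rmul R (a + a') = rmul R a + rmul R a' :=
  ModuleCat.hom_ext (LinearMap.ext fun x => mul_add (show R from x) a a')

lemma rmul_mul (a a' : R) : rmul R (a * a') = rmul R a ≫ rmul R a' :=
  ModuleCat.hom_ext (LinearMap.ext fun x => (mul_assoc (show R from x) a a').symm)

lemma rmul_one : rmul R 1 = 𝟙 (ModuleCat.of R R) :=
  ModuleCat.hom_ext (LinearMap.ext fun x => mul_one (show R from x))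

section Equiv

variable {A B : Type u} [Ring A] [Ring B]
variable (e : ModuleCat.{u} A ≌ ModuleCat.{u} B)

/-- The pairing `G(B) × F(A) → A`. -/
def τE (x : e.inverse.obj (ModuleCat.of B B)) (y : e.functor.obj (ModuleCat.of A A)) : A :=
  e.unitInv.app (ModuleCat.of A A)
    (e.inverse.map (lsmul (e.functor.obj (ModuleCat.of A A)) y) x)

lemma τE_add (x x' : e.inverse.obj (ModuleCat.of B B))
    (y : e.functor.obj (ModuleCat.of A A)) :
    τE e (x + x') y = τE e x y + τE e x' y := by
  unfold τE
  rw [map_add, map_add]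

lemma τE_left (a : A) (x : e.inverse.obj (ModuleCat.of B B))
    (y : e.functor.obj (ModuleCat.of A A)) :
    τE e (a • x) y = a * τE e x y := by
  unfold τE
  rw [map_smul, map_smul]
  rfl

variable [e.functor.Additive] [e.inverse.Additive]

lemma τE_add' (x : e.inverse.obj (ModuleCat.of B B))
    (y y' : e.functor.obj (ModuleCat.of A A)) :
    τE e x (y + y') = τE e x y + τE e x y' := by
  unfold τE
  rw [lsmul_add, Functor.map_add]
  exact map_add (ConcreteCategory.hom (e.unitInv.app (ModuleCat.of A A)))
    (ConcreteCategory.hom (e.inverse.map (lsmul (e.functor.obj (ModuleCat.of A A)) y)) x)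
    (ConcreteCategory.hom (e.inverse.map (lsmul (e.functor.obj (ModuleCat.of A A)) y')) x)

lemma τE_right (x : e.inverse.obj (ModuleCat.of B B))
    (y : e.functor.obj (ModuleCat.of A A)) (a : A) :
    τE e x (e.functor.map (rmul A a) y) = τE e x y * a := by
  have hm : e.inverse.map (lsmul (e.functor.obj (ModuleCat.of A A))
        (e.functor.map (rmul A a) y)) ≫ e.unitInv.app (ModuleCat.of A A)
      = e.inverse.map (lsmul (e.functor.obj (ModuleCat.of A A)) y)
          ≫ e.unitInv.app (ModuleCat.of A A) ≫ rmul A a := by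
    rw [← lsmul_comp (e.functor.map (rmul A a)) y, e.inverse.map_comp, Category.assoc]
    congr 1
    exact e.unitInv.naturality (rmul A a)
  exact ConcreteCategory.congr_hom hm x

lemma τE_balanced (x : e.inverse.obj (ModuleCat.of B B)) (b : B)
    (y : e.functor.obj (ModuleCat.of A A)) :
    τE e (e.inverse.map (rmul B b) x) y = τE e x (b • y) := by
  unfold τE
  rw [← rmul_comp_lsmul _ b y, e.inverse.map_comp]
  rfl

lemma rmul_counit (y : e.functor.obj (ModuleCat.of A A))
    (x' : e.inverse.obj (ModuleCat.of B B)) :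
    rmul B (e.counit.app (ModuleCat.of B B)
        (e.functor.map (lsmul (e.inverse.obj (ModuleCat.of B B)) x') y))
      = lsmul (e.functor.obj (ModuleCat.of A A)) y
          ≫ e.functor.map (lsmul (e.inverse.obj (ModuleCat.of B B)) x')
          ≫ e.counit.app (ModuleCat.of B B) := by
  apply ModuleCat.hom_ext; apply LinearMap.ext; intro b
  exact (map_smul (e.functor.map (lsmul (e.inverse.obj (ModuleCat.of B B)) x')
    ≫ e.counit.app (ModuleCat.of B B)).hom (show B from b) y).symm

lemma assoc₁E (x : e.inverse.obj (ModuleCat.of B B))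
    (y : e.functor.obj (ModuleCat.of A A))
    (x' : e.inverse.obj (ModuleCat.of B B)) :
    (τE e x y) • x' = e.inverse.map (rmul B (e.counit.app (ModuleCat.of B B)
      (e.functor.map (lsmul (e.inverse.obj (ModuleCat.of B B)) x') y))) x := by
  have hm : e.inverse.map (lsmul (e.functor.obj (ModuleCat.of A A)) y)
        ≫ e.unitInv.app (ModuleCat.of A A)
        ≫ lsmul (e.inverse.obj (ModuleCat.of B B)) x'
      = e.inverse.map (rmul B (e.counit.app (ModuleCat.of B B)
          (e.functor.map (lsmul (e.inverse.obj (ModuleCat.of B B)) x') y))) := by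
    rw [rmul_counit, e.inverse.map_comp, e.inverse.map_comp]
    congr 1
    have hnat := e.unitInv.naturality (lsmul (e.inverse.obj (ModuleCat.of B B)) x')
    simp only [Functor.id_map, Functor.comp_map] at hnat
    rw [← hnat, e.unitInv_app_inverse]
  exact ConcreteCategory.congr_hom hm x

/-- Generation: the elements `F(l_v)(y)`, `y : F(A)`, `v : V`, generate `F(V)` as an
additive group. -/
lemma βgenE (V : ModuleCat.{u} A) :
    AddSubgroup.closure {w : e.functor.obj V |
      ∃ (y : e.functor.obj (ModuleCat.of A A)) (v : V),
        w = e.functor.map (lsmul V v) y} = ⊤ := by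
  set S : Set (e.functor.obj V) := {w : e.functor.obj V |
      ∃ (y : e.functor.obj (ModuleCat.of A A)) (v : V),
        w = e.functor.map (lsmul V v) y} with hS
  set N : AddSubgroup (e.functor.obj V) := AddSubgroup.closure S with hN
  have hsmul : ∀ (b : B) {w : e.functor.obj V}, w ∈ N → b • w ∈ N := by
    intro b w hw
    refine AddSubgroup.closure_induction ?_ ?_ ?_ ?_ hw
    · rintro w ⟨y, v, rfl⟩
      exact AddSubgroup.subset_closure ⟨b • y, v, (map_smul (ConcreteCategory.hom (e.functor.map (lsmul V v))) b y).symm⟩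
    · rw [smul_zero]; exact N.zero_mem
    · intro w₁ w₂ _ _ h1 h2
      rw [smul_add]; exact N.add_mem h1 h2
    · intro w₁ _ h1
      rw [smul_neg]; exact N.neg_mem h1
  let N' : Submodule B (e.functor.obj V) :=
    { carrier := N
      add_mem' := fun h1 h2 => N.add_mem h1 h2
      zero_mem' := N.zero_mem
      smul_mem' := fun b w hw => hsmul b hw }
  have key : N' = ⊤ := by
    by_contra hNt
    obtain ⟨w₀, hw₀⟩ : ∃ w, w ∉ N' := by
      by_contra hc
      push_neg at hc
      exact hNt (Submodule.eq_top_iff'.mpr hc)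
    let Q : ModuleCat.{u} B := ModuleCat.of B ((e.functor.obj V) ⧸ N')
    let π : e.functor.obj V ⟶ Q := ModuleCat.ofHom N'.mkQ
    have hπ0 : π w₀ ≠ 0 := fun h0 => hw₀ ((Submodule.Quotient.mk_eq_zero N').mp h0)
    let ρ : V ⟶ e.inverse.obj Q := e.unit.app V ≫ e.inverse.map π
    have hπρ : π = e.functor.map ρ ≫ e.counit.app Q := by
      show π = e.functor.map (e.unit.app V ≫ e.inverse.map π) ≫ e.counit.app Q
      rw [e.functor.map_comp, Category.assoc]
      have hnat := e.counit.naturality π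
      simp only [Functor.id_map, Functor.comp_map] at hnat
      rw [hnat, ← Category.assoc]
      simp
    have hρ : ∃ v : V, ρ v ≠ 0 := by
      by_contra hc
      push_neg at hc
      have : ρ = 0 := ModuleCat.hom_ext (LinearMap.ext fun v => hc v)
      apply hπ0
      rw [hπρ, this, e.functor.map_zero, Limits.zero_comp]
      rfl
    obtain ⟨v, hv⟩ := hρ
    have hFl : e.functor.map (lsmul (e.inverse.obj Q) (ρ v)) ≠ 0 := by
      intro h0
      apply lsmul_ne_zero hv
      apply e.functor.map_injective
      rw [h0, e.functor.map_zero]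
    obtain ⟨y, hy⟩ : ∃ y, e.functor.map (lsmul (e.inverse.obj Q) (ρ v)) y ≠ 0 := by
      by_contra hc
      push_neg at hc
      exact hFl (ModuleCat.hom_ext (LinearMap.ext fun y => hc y))
    have hmem : e.functor.map (lsmul V v) y ∈ N' :=
      AddSubgroup.subset_closure ⟨y, v, rfl⟩
    have hzero : π (e.functor.map (lsmul V v) y) = 0 :=
      (Submodule.Quotient.mk_eq_zero N').mpr hmem
    apply hy
    have hcomp : e.functor.map (lsmul V v) ≫ e.functor.map ρ
        = e.functor.map (lsmul (e.inverse.obj Q) (ρ v)) := by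
      rw [← e.functor.map_comp, lsmul_comp]
    have : π (e.functor.map (lsmul V v) y)
        = e.counit.app Q (e.functor.map (lsmul (e.inverse.obj Q) (ρ v)) y) := by
      rw [hπρ]
      show (e.functor.map (lsmul V v) ≫ e.functor.map ρ ≫ e.counit.app Q) y = _
      rw [← Category.assoc, hcomp]
      rfl
    rw [this] at hzero
    -- counit.app Q is injective
    have h3 : e.counitInv.app Q (e.counit.app Q
          (e.functor.map (lsmul (e.inverse.obj Q) (ρ v)) y))
        = e.functor.map (lsmul (e.inverse.obj Q) (ρ v)) y :=
      ConcreteCategory.congr_hom (e.counitIso.hom_inv_id_app Q) _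
    rw [← h3, hzero, map_zero]
  -- conclude
  refine (AddSubgroup.eq_top_iff' _).mpr fun w => ?_
  have hw : w ∈ N' := key ▸ Submodule.mem_top
  exact hw

end Equiv

/-- The left `B`-module structure on `B →+ T` given by `(b • φ) c = φ (c * b)`. -/
def homModule (B T : Type u) [Ring B] [AddCommGroup T] : Module B (B →+ T) where
  smul b φ := φ.comp (AddMonoidHom.mulRight b)
  one_smul φ := AddMonoidHom.ext fun c => congrArg φ (mul_one c)
  mul_smul b b' φ := AddMonoidHom.ext fun c => congrArg φ (mul_assoc c b b').symm
  smul_zero b := rfl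
  smul_add b φ ψ := rfl
  add_smul b b' φ := AddMonoidHom.ext fun c => by
    show φ (c * (b + b')) = φ (c * b) + φ (c * b')
    rw [mul_add, map_add]
  zero_smul φ := AddMonoidHom.ext fun c => by
    show φ (c * 0) = 0
    rw [mul_zero, map_zero]

section Equiv2

variable {A B : Type u} [Ring A] [Ring B]
variable (e : ModuleCat.{u} A ≌ ModuleCat.{u} B)
variable [e.functor.Additive] [e.inverse.Additive]

lemma existsUnique_hom (V : ModuleCat.{u} A) (T : Type u) [AddCommGroup T]
    (γ : e.functor.obj (ModuleCat.of A A) → V → T)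
    (hγ1 : ∀ y y' v, γ (y + y') v = γ y v + γ y' v)
    (hγ2 : ∀ y v v', γ y (v + v') = γ y v + γ y v')
    (hγ3 : ∀ y a v, γ (e.functor.map (rmul A a) y) v = γ y (a • v)) :
    ∃! h : (e.functor.obj V) →+ T,
      ∀ y v, h (e.functor.map (lsmul V v) y) = γ y v := by
  classical
  have hγ0 : ∀ v, γ 0 v = 0 := by
    intro v
    have h := hγ1 0 0 v
    rw [add_zero] at h
    exact add_left_cancel (h.symm.trans (add_zero _).symm)
  letI : Module B (B →+ T) := homModule B T
  set T' : ModuleCat.{u} B := ModuleCat.of B (B →+ T) with hT'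
  -- the B-linear maps κ v : Y ⟶ T'
  let κ : V → (e.functor.obj (ModuleCat.of A A) ⟶ T') := fun v =>
    ModuleCat.ofHom <|
    { toFun := fun y =>
        { toFun := fun b => γ (b • y) v
          map_zero' := by
            show γ ((0 : B) • y) v = 0
            rw [zero_smul]; exact hγ0 v
          map_add' := fun b b' => by
            show γ ((b + b') • y) v = γ (b • y) v + γ (b' • y) v
            rw [add_smul]; exact hγ1 _ _ _ }
      map_add' := fun y y' => AddMonoidHom.ext fun b => by
        show γ (b • (y + y')) v = γ (b • y) v + γ (b • y') v
        rw [smul_add]; exact hγ1 _ _ _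
      map_smul' := fun b' y => AddMonoidHom.ext fun b => by
        show γ (b • b' • y) v = γ ((b * b') • y) v
        rw [smul_smul] }
  have hκ_apply : ∀ (v : V) (y) (b : B), (show B →+ T from κ v y) b = γ (b • y) v :=
    fun _ _ _ => rfl
  have hκ_smul : ∀ (a : A) (v : V), κ (a • v) = e.functor.map (rmul A a) ≫ κ v := by
    intro a v
    apply ModuleCat.hom_ext; apply LinearMap.ext; intro y
    apply AddMonoidHom.ext; intro b
    show γ (b • y) (a • v) = γ (b • (e.functor.map (rmul A a) y)) v
    rw [← map_smul (ConcreteCategory.hom (e.functor.map (rmul A a))) b y]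
    exact (hγ3 (b • y) a v).symm
  have hκ_add : ∀ v v' : V, κ (v + v') = κ v + κ v' :=
    fun v v' => ModuleCat.hom_ext (LinearMap.ext fun y => AddMonoidHom.ext fun b => hγ2 _ _ _)
  -- the A-linear map ψ : V ⟶ G T'
  let ψfun : V → e.inverse.obj T' :=
    fun v => e.inverse.map (κ v) (e.unit.app (ModuleCat.of A A) (1 : A))
  let ψ : V ⟶ e.inverse.obj T' :=
    ModuleCat.ofHom <|
    { toFun := ψfun
      map_add' := fun v v' => by
        show e.inverse.map (κ (v + v')) (e.unit.app (ModuleCat.of A A) (1 : A))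
          = e.inverse.map (κ v) (e.unit.app (ModuleCat.of A A) (1 : A))
            + e.inverse.map (κ v') (e.unit.app (ModuleCat.of A A) (1 : A))
        rw [hκ_add, Functor.map_add]
        rfl
      map_smul' := fun a v => by
        show e.inverse.map (κ (a • v)) (e.unit.app (ModuleCat.of A A) (1 : A))
          = a • e.inverse.map (κ v) (e.unit.app (ModuleCat.of A A) (1 : A))
        rw [hκ_smul a v, Functor.map_comp]
        show e.inverse.map (κ v) (e.inverse.map (e.functor.map (rmul A a))
          (e.unit.app (ModuleCat.of A A) (1 : A))) = a • e.inverse.map (κ v)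
            (e.unit.app (ModuleCat.of A A) (1 : A))
        have hu : e.inverse.map (e.functor.map (rmul A a))
              (e.unit.app (ModuleCat.of A A) (1 : A))
            = e.unit.app (ModuleCat.of A A) ((1 : A) * a) :=
          (ConcreteCategory.congr_hom (e.unit.naturality (rmul A a)) (1 : A)).symm
        rw [hu, one_mul, ← map_smul (ConcreteCategory.hom (e.inverse.map (κ v))),
            ← map_smul (ConcreteCategory.hom (e.unit.app (ModuleCat.of A A)))]
        exact congrArg (fun z : A =>
          e.inverse.map (κ v) (e.unit.app (ModuleCat.of A A) z)) (mul_one a).symm }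
  have hψ : ∀ v : V, ψ v = e.inverse.map (κ v) (e.unit.app (ModuleCat.of A A) (1 : A)) :=
    fun v => rfl
  have hlsmul : ∀ v : V, lsmul (e.inverse.obj T') (ψ v)
      = e.unit.app (ModuleCat.of A A) ≫ e.inverse.map (κ v) := by
    intro v
    apply ModuleCat.hom_ext; apply LinearMap.ext; intro a
    show (show A from a) • e.inverse.map (κ v) (e.unit.app (ModuleCat.of A A) (1 : A))
      = e.inverse.map (κ v) (e.unit.app (ModuleCat.of A A) a)
    rw [← map_smul (ConcreteCategory.hom (e.inverse.map (κ v))),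
      ← map_smul (ConcreteCategory.hom (e.unit.app (ModuleCat.of A A)))]
    exact congrArg (fun z : A =>
      e.inverse.map (κ v) (e.unit.app (ModuleCat.of A A) z)) (mul_one (show A from a))
  let hfun : (e.functor.obj V) → T :=
    fun w => (show B →+ T from e.counit.app T' (e.functor.map ψ w)) 1
  let h : (e.functor.obj V) →+ T :=
    AddMonoidHom.mk' hfun (fun w w' => by
      show (show B →+ T from e.counit.app T' (e.functor.map ψ (w + w'))) 1 = _
      rw [map_add, map_add]
      rfl)
  have hmain : ∀ y v, h (e.functor.map (lsmul V v) y) = γ y v := by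
    intro y v
    show (show B →+ T from
      e.counit.app T' (e.functor.map ψ (e.functor.map (lsmul V v) y))) 1 = γ y v
    have h1 : e.functor.map ψ (e.functor.map (lsmul V v) y)
        = e.functor.map (lsmul (e.inverse.obj T') (ψ v)) y := by
      rw [← lsmul_comp ψ v, e.functor.map_comp]
      rfl
    rw [h1, hlsmul v, e.functor.map_comp]
    have h2 := ConcreteCategory.congr_hom (e.counit.naturality (κ v))
      (e.functor.map (e.unit.app (ModuleCat.of A A)) y)
    show (show B →+ T from e.counit.app T' (e.functor.map (e.inverse.map (κ v))
      (e.functor.map (e.unit.app (ModuleCat.of A A)) y))) 1 = γ y v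
    rw [show e.counit.app T' (e.functor.map (e.inverse.map (κ v))
        (e.functor.map (e.unit.app (ModuleCat.of A A)) y))
      = κ v (e.counit.app (e.functor.obj (ModuleCat.of A A))
          (e.functor.map (e.unit.app (ModuleCat.of A A)) y)) from h2]
    rw [show e.counit.app (e.functor.obj (ModuleCat.of A A))
        (e.functor.map (e.unit.app (ModuleCat.of A A)) y) = y from
      ConcreteCategory.congr_hom (e.functor_unit_comp (ModuleCat.of A A)) y]
    show γ ((1 : B) • y) v = γ y v
    rw [one_smul]
  refine ⟨h, hmain, ?_⟩
  intro h' hh'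
  apply AddMonoidHom.eq_of_eqOn_dense (βgenE e V)
  rintro w ⟨y, v, rfl⟩
  rw [hh' y v, hmain y v]

lemma σE_surj : AddSubgroup.closure
    {b : B | ∃ (y : e.functor.obj (ModuleCat.of A A))
      (x : e.inverse.obj (ModuleCat.of B B)), b = τE e.symm y x} = ⊤ := by
  have hgen := βgenE e (e.inverse.obj (ModuleCat.of B B))
  let φ : e.functor.obj (e.inverse.obj (ModuleCat.of B B)) →+ B :=
    (e.counit.app (ModuleCat.of B B)).hom.toAddMonoidHom
  have hsurj : Function.Surjective φ := fun b =>
    ⟨e.counitInv.app (ModuleCat.of B B) b,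
      ConcreteCategory.congr_hom (e.counitIso.inv_hom_id_app (ModuleCat.of B B)) b⟩
  have hmap := AddMonoidHom.map_closure φ
    {w : e.functor.obj (e.inverse.obj (ModuleCat.of B B)) |
      ∃ (y : e.functor.obj (ModuleCat.of A A)) (x : e.inverse.obj (ModuleCat.of B B)),
        w = e.functor.map (lsmul (e.inverse.obj (ModuleCat.of B B)) x) y}
  rw [hgen, AddSubgroup.map_top_of_surjective φ hsurj] at hmap
  have hset : φ '' {w : e.functor.obj (e.inverse.obj (ModuleCat.of B B)) |
      ∃ (y : e.functor.obj (ModuleCat.of A A)) (x : e.inverse.obj (ModuleCat.of B B)),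
        w = e.functor.map (lsmul (e.inverse.obj (ModuleCat.of B B)) x) y}
      = {b : B | ∃ (y : e.functor.obj (ModuleCat.of A A))
          (x : e.inverse.obj (ModuleCat.of B B)), b = τE e.symm y x} := by
    ext b
    constructor
    · rintro ⟨w, ⟨y, x, rfl⟩, rfl⟩
      exact ⟨y, x, rfl⟩
    · rintro ⟨y, x, rfl⟩
      exact ⟨e.functor.map (lsmul (e.inverse.obj (ModuleCat.of B B)) x) y, ⟨y, x, rfl⟩, rfl⟩
  rw [hset] at hmap
  exact hmap.symm

end Equiv2

end MoritaAux

open MoritaAux in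
/-- Morita II: let `F : A-Mod → B-Mod`, `G : B-Mod → A-Mod` be an additive
adjoint equivalence, and set `Y = F(A)`, `X = G(B)`.  Then `Y` is a `(B,A)`-bimodule with
right `A`-action given by `F(r_a)`, `X` is an `(A,B)`-bimodule with right `B`-action given
by `G(r_b)`, there are bimodule isomorphisms `X ⊗_B Y ≅ A` and `Y ⊗_A X ≅ B` (i.e. a
Morita context with surjective pairings), and `F ≅ Y ⊗_A (-)`. -/
theorem morita_II (A B : Type u) [Ring A] [Ring B]
    (e : ModuleCat.{u} A ≌ ModuleCat.{u} B)
    [e.functor.Additive] [e.inverse.Additive] :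
    ∃ M : MoritaData A B (e.inverse.obj (ModuleCat.of B B))
        (e.functor.obj (ModuleCat.of A A)),
      (∀ (a : A) (y : e.functor.obj (ModuleCat.of A A)),
        M.yr y a = e.functor.map (rmul A a) y) ∧
      (∀ (b : B) (x : e.inverse.obj (ModuleCat.of B B)),
        M.xr x b = e.inverse.map (rmul B b) x) ∧
      IsTensorFunctor A B (e.functor.obj (ModuleCat.of A A)) M.yr e.functor := by
  haveI h1 : e.symm.functor.Additive := (inferInstance : e.inverse.Additive)
  haveI h2 : e.symm.inverse.Additive := (inferInstance : e.functor.Additive)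
  refine ⟨{
    xr := fun x b => e.inverse.map (rmul B b) x
    yr := fun y a => e.functor.map (rmul A a) y
    xr_add := fun x x' b => map_add _ x x'
    xr_add' := fun x b b' => by
      show e.inverse.map (rmul B (b + b')) x
        = e.inverse.map (rmul B b) x + e.inverse.map (rmul B b') x
      rw [rmul_add, Functor.map_add]; rfl
    xr_mul := fun x b b' => by
      show e.inverse.map (rmul B (b * b')) x
        = e.inverse.map (rmul B b') (e.inverse.map (rmul B b) x)
      rw [rmul_mul, Functor.map_comp]; rfl
    xr_one := fun x => by
      show e.inverse.map (rmul B 1) x = x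
      rw [rmul_one, e.inverse.map_id]; rfl
    xr_smul := fun a x b => map_smul _ a x
    yr_add := fun y y' a => map_add _ y y'
    yr_add' := fun y a a' => by
      show e.functor.map (rmul A (a + a')) y
        = e.functor.map (rmul A a) y + e.functor.map (rmul A a') y
      rw [rmul_add, Functor.map_add]; rfl
    yr_mul := fun y a a' => by
      show e.functor.map (rmul A (a * a')) y
        = e.functor.map (rmul A a') (e.functor.map (rmul A a) y)
      rw [rmul_mul, Functor.map_comp]; rfl
    yr_one := fun y => by
      show e.functor.map (rmul A 1) y = y
      rw [rmul_one, e.functor.map_id]; rfl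
    yr_smul := fun b y a => map_smul _ b y
    τ := τE e
    σ := fun y x => τE e.symm y x
    τ_add := fun x x' y => τE_add e x x' y
    τ_add' := fun x y y' => τE_add' e x y y'
    τ_left := fun a x y => τE_left e a x y
    τ_right := fun x y a => τE_right e x y a
    τ_balanced := fun x b y => τE_balanced e x b y
    σ_add := fun y y' x => τE_add e.symm y y' x
    σ_add' := fun y x x' => τE_add' e.symm y x x'
    σ_left := fun b y x => τE_left e.symm b y x
    σ_right := fun y x b => τE_right e.symm y x b
    σ_balanced := fun y a x => τE_balanced e.symm y a x
    assoc₁ := fun x y x' => assoc₁E e x y x'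
    assoc₂ := fun y x y' => assoc₁E e.symm y x y'
    τ_surj := σE_surj e.symm
    σ_surj := σE_surj e }, fun a y => rfl, fun b x => rfl, ?_⟩
  refine ⟨fun V y v => e.functor.map (lsmul V v) y, ?_, ?_, ?_, ?_, ?_, ?_⟩
  · intro V y y' v
    exact map_add _ y y'
  · intro V y v v'
    show e.functor.map (lsmul V (v + v')) y
      = e.functor.map (lsmul V v) y + e.functor.map (lsmul V v') y
    rw [lsmul_add, Functor.map_add]; rfl
  · intro V y a v
    show e.functor.map (lsmul V v) (e.functor.map (rmul A a) y)
      = e.functor.map (lsmul V (a • v)) y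
    rw [← rmul_comp_lsmul V a v, e.functor.map_comp]
    rfl
  · intro V b y v
    exact map_smul _ b y
  · intro V W f y v
    show e.functor.map f (e.functor.map (lsmul V v) y) = e.functor.map (lsmul W (f v)) y
    rw [← lsmul_comp f v, e.functor.map_comp]
    rfl
  · intro V T _ γ hγ1 hγ2 hγ3
    exact existsUnique_hom e V T γ hγ1 hγ2 hγ3
end

section
/- Let A and B be unital rings and F : A-Mod → B-Mod an additive functor that is right exact and preserves arbitrary direct sums. Then F is naturally isomorphic to the functor F(A) ⊗_A (-), where F(A) is viewed as a (B,A)-bimodule with right A-action given by a · acting via F(r_a). -/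
open CategoryTheory CategoryTheory.Limits

namespace EWaux

noncomputable section
variable {A : Type u} [Ring A]

/-- `a ↦ a • v` as a hom. -/
def toSpan (V : ModuleCat.{u} A) (v : V) : ModuleCat.of A A ⟶ V :=
  ModuleCat.ofHom (LinearMap.toSpanSingleton A V v)

@[simp] lemma toSpan_apply (V : ModuleCat.{u} A) (v : V) (x : A) :
    toSpan V v x = x • v := rfl

abbrev cofan (ι : Type u) : Cofan (fun _ : ι => ModuleCat.of A A) :=
  Cofan.mk (ModuleCat.of A (ι →₀ A)) (fun i => ModuleCat.ofHom (Finsupp.lsingle i : A →ₗ[A] (ι →₀ A)))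

abbrev cofanIsColimit (ι : Type u) : IsColimit (cofan (A := A) ι) :=
  mkCofanColimit _
    (fun t => ModuleCat.ofHom (Finsupp.lsum ℕ (fun i => (t.inj i).hom) : (ι →₀ A) →ₗ[A] t.pt))
    (fun t i => by
      refine ModuleCat.hom_ext (LinearMap.ext fun a => ?_)
      simp only [cofan, cofan_mk_inj, ModuleCat.hom_comp, ModuleCat.hom_ofHom]
      rw [LinearMap.comp_apply]
      exact Finsupp.lsum_single _ _ _ (a : A))
    (fun t m hm => by
      refine ModuleCat.hom_ext <| Finsupp.lhom_ext' fun i => ?_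
      refine LinearMap.ext fun a => ?_
      have := congrArg (fun (f : ModuleCat.of A A ⟶ t.pt) => f.hom a) (hm i)
      simp [cofan, ModuleCat.hom_comp] at this ⊢
      simpa using this)


variable (V : ModuleCat.{u} A)

/-- Counit of free presentation: `Σ aᵥ·v`. -/
def eps : ModuleCat.of A ((V : Type u) →₀ A) ⟶ V :=
  ModuleCat.ofHom (Finsupp.linearCombination A (fun v : V => v))

@[simp] lemma eps_single (v : V) (a : A) : eps V (Finsupp.single v a) = a • v :=
  Finsupp.linearCombination_single A a v

lemma eps_surjective : Function.Surjective (eps V) := fun v =>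
  ⟨Finsupp.single v 1, by rw [eps_single, one_smul]⟩

/-- Relations map. -/
def qmap : ModuleCat.of A ((LinearMap.ker (eps V).hom : Type u) →₀ A) ⟶
    ModuleCat.of A ((V : Type u) →₀ A) :=
  ModuleCat.ofHom (Finsupp.linearCombination A (fun k : LinearMap.ker (eps V).hom => k.1))

@[simp] lemma qmap_single (k : LinearMap.ker (eps V).hom) (a : A) :
    qmap V (Finsupp.single k a) = a • k.1 :=
  Finsupp.linearCombination_single A a k

lemma qmap_eps : qmap V ≫ eps V = 0 := by
  refine ModuleCat.hom_ext <| Finsupp.lhom_ext fun k a => ?_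
  have hk : eps V k.1 = 0 := k.2
  show eps V (qmap V (Finsupp.single k a)) = (0 : ModuleCat.of A _ ⟶ V) (Finsupp.single k a)
  rw [qmap_single, map_smul, hk, smul_zero]
  rfl

lemma ker_eps_le_range_qmap : LinearMap.ker (eps V).hom ≤ LinearMap.range (qmap V).hom := by
  intro w hw
  refine ⟨Finsupp.single ⟨w, hw⟩ 1, ?_⟩
  rw [qmap_single, one_smul]

instance : Epi (eps V) := (ModuleCat.epi_iff_surjective _).2 (eps_surjective V)

def epsEquiv : ((((V : Type u) →₀ A) ⧸ LinearMap.ker (eps V).hom) : Type u) ≃ₗ[A] V :=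
  LinearEquiv.ofBijective ((LinearMap.ker (eps V).hom).liftQ (eps V).hom le_rfl)
    ⟨by rw [← LinearMap.ker_eq_bot, Submodule.ker_liftQ_eq_bot]; exact le_rfl,
     fun v => by
       obtain ⟨w, rfl⟩ := eps_surjective V v
       exact ⟨Submodule.Quotient.mk w, rfl⟩⟩

lemma epsEquiv_mk (w : (V : Type u) →₀ A) :
    epsEquiv V (Submodule.Quotient.mk w) = eps V w :=
  rfl

def epsDesc {Z' : ModuleCat.{u} A} (g' : ModuleCat.of A ((V : Type u) →₀ A) ⟶ Z')
    (hle : LinearMap.ker (eps V).hom ≤ LinearMap.ker (g'.hom : ((V : Type u) →₀ A) →ₗ[A] Z')) :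
    V ⟶ Z' :=
  ModuleCat.ofHom ((LinearMap.ker (eps V).hom).liftQ g'.hom hle ∘ₗ (epsEquiv V).symm.toLinearMap : V →ₗ[A] Z')

lemma epsDesc_eps {Z' : ModuleCat.{u} A} (g' : ModuleCat.of A ((V : Type u) →₀ A) ⟶ Z')
    (hle : LinearMap.ker (eps V).hom ≤ LinearMap.ker (g'.hom : ((V : Type u) →₀ A) →ₗ[A] Z'))
    (w : (V : Type u) →₀ A) : epsDesc V g' hle (eps V w) = g' w := by
  have h1 : (epsEquiv V).symm (eps V w) = Submodule.Quotient.mk w :=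
    (LinearEquiv.symm_apply_eq _).2 (epsEquiv_mk V w).symm
  show ((LinearMap.ker (eps V).hom).liftQ g'.hom hle) ((epsEquiv V).symm (eps V w)) = g' w
  rw [h1]
  rfl

/-- `eps` is the cokernel of `qmap`. -/
def epsIsCokernel : IsColimit (CokernelCofork.ofπ (eps V) (qmap_eps V)) := by
  refine CokernelCofork.IsColimit.ofπ' _ _ (fun {Z'} g' hg' => ?_)
  have hle : LinearMap.ker (eps V).hom ≤ LinearMap.ker (g'.hom : ((V : Type u) →₀ A) →ₗ[A] Z') := by
    intro w hw
    obtain ⟨z, rfl⟩ := ker_eps_le_range_qmap V hw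
    have := congrArg (fun (f : _ ⟶ Z') => f z) hg'
    simpa [ModuleCat.hom_comp, LinearMap.comp_apply] using this
  refine ⟨epsDesc V g' hle, ?_⟩
  refine ModuleCat.hom_ext (LinearMap.ext fun w => ?_)
  show epsDesc V g' hle (eps V w) = g' w
  exact epsDesc_eps V g' hle w


variable {V}

lemma toSpan_zero : toSpan V (0 : V) = 0 := by
  refine ModuleCat.hom_ext (LinearMap.ext_ring ?_)
  show (1 : A) • (0 : V) = 0
  rw [smul_zero]

lemma toSpan_add (v v' : V) : toSpan V (v + v') = toSpan V v + toSpan V v' := by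
  refine ModuleCat.hom_ext (LinearMap.ext_ring ?_)
  show (1 : A) • (v + v') = (1 : A) • v + (1 : A) • v'
  rw [one_smul, one_smul, one_smul]

lemma toSpan_comp {W : ModuleCat.{u} A} (f : V ⟶ W) (v : V) :
    toSpan V v ≫ f = toSpan W (f v) := by
  refine ModuleCat.hom_ext (LinearMap.ext_ring ?_)
  show f ((1 : A) • v) = (1 : A) • f v
  rw [one_smul, one_smul]

lemma rmul_comp_toSpan (a : A) (v : V) :
    rmul A a ≫ toSpan V v = toSpan V (a • v) := by
  refine ModuleCat.hom_ext (LinearMap.ext_ring ?_)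
  show ((1 : A) * a) • v = (1 : A) • (a • v)
  rw [one_mul, one_smul]

lemma single_toSpan (ι : Type u) (i : ι) (a : A) :
    toSpan (ModuleCat.of A (ι →₀ A)) (Finsupp.single i a)
      = rmul A a ≫ (cofan (A := A) ι).inj i := by
  refine ModuleCat.hom_ext (LinearMap.ext_ring ?_)
  show (1 : A) • Finsupp.single i a = Finsupp.single i ((1 : A) * a)
  rw [one_smul, one_mul]

variable (V)

lemma inj_comp_eps (v : V) :
    (cofan (A := A) (V : Type u)).inj v ≫ eps V = toSpan V v := by
  refine ModuleCat.hom_ext (LinearMap.ext_ring ?_)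
  show eps V (Finsupp.single v (1 : A)) = (1 : A) • v
  rw [eps_single]

lemma inj_comp_qmap (k : LinearMap.ker (eps V).hom) :
    (cofan (A := A) (LinearMap.ker (eps V).hom : Type u)).inj k ≫ qmap V
      = toSpan (ModuleCat.of A ((V : Type u) →₀ A)) k.1 := by
  refine ModuleCat.hom_ext (LinearMap.ext_ring ?_)
  show qmap V (Finsupp.single k (1 : A)) = (1 : A) • k.1
  rw [qmap_single]

section Fside

variable {B : Type u} [Ring B] (F : ModuleCat.{u} A ⥤ ModuleCat.{u} B) [F.Additive]

lemma addHom_eq_zero (ι : Type u) [PreservesColimitsOfShape (Discrete ι) F]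
    {T : Type u} [AddCommGroup T] (h : ↥(F.obj (ModuleCat.of A (ι →₀ A))) →+ T)
    (H : ∀ (i : ι) (y : F.obj (ModuleCat.of A A)),
      h (F.map ((cofan (A := A) ι).inj i) y) = 0)
    (x : F.obj (ModuleCat.of A (ι →₀ A))) : h x = 0 := by
  set S := ⨆ i : ι, LinearMap.range (F.map ((cofan (A := A) ι).inj i)).hom with hS
  have htop : S = ⊤ := by
    let πh : (F.mapCocone (cofan (A := A) ι)).pt ⟶
        ModuleCat.of B (_ ⧸ S) := ModuleCat.ofHom S.mkQ
    have hcomp : ∀ j, (F.mapCocone (cofan (A := A) ι)).ι.app j ≫ πh =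
        (F.mapCocone (cofan (A := A) ι)).ι.app j ≫ 0 := by
      rintro ⟨i⟩
      ext y
      rw [ModuleCat.hom_comp, ModuleCat.hom_comp, LinearMap.comp_apply, LinearMap.comp_apply]
      show S.mkQ _ = (0 : _ →ₗ[B] _) _
      rw [LinearMap.zero_apply, Submodule.mkQ_apply, Submodule.Quotient.mk_eq_zero]
      exact le_iSup (fun i : ι => LinearMap.range (F.map ((cofan (A := A) ι).inj i)).hom) i
        ⟨y, rfl⟩
    have hπ : πh = 0 :=
      (isColimitOfPreserves F (cofanIsColimit (A := A) ι)).hom_ext hcomp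
    rw [Submodule.eq_top_iff']
    intro z
    have h0 : πh z = 0 := by rw [hπ]; rfl
    exact (Submodule.Quotient.mk_eq_zero S).mp h0
  have hx : x ∈ S := htop ▸ Submodule.mem_top
  refine Submodule.iSup_induction (motive := fun z => h z = 0) _ hx (fun i z hz => ?_)
    (map_zero h) (fun a b ha hb => by show h (a + b) = 0; rw [map_add, ha, hb, add_zero])
  obtain ⟨y, rfl⟩ := hz
  exact H i y

lemma exists_addHom (ι : Type u) [PreservesColimitsOfShape (Discrete ι) F]
    {T : Type u} [AddCommGroup T] (c : ι → (↥(F.obj (ModuleCat.of A A)) →+ T)) :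
    ∃ g : ↥(F.obj (ModuleCat.of A (ι →₀ A))) →+ T,
      ∀ (i : ι) (y : F.obj (ModuleCat.of A A)),
        g (F.map ((cofan (A := A) ι).inj i) y) = c i y := by
  classical
  let c₂ : Cocone (Discrete.functor (fun _ : ι => ModuleCat.of A A) ⋙ F) :=
    { pt := ModuleCat.of B (DirectSum ι (fun _ : ι => ↥(F.obj (ModuleCat.of A A))))
      ι := Discrete.natTrans fun i =>
        ModuleCat.ofHom (DirectSum.lof B ι (fun _ => ↥(F.obj (ModuleCat.of A A))) i.as :
          ↥(F.obj (ModuleCat.of A A)) →ₗ[B]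
            DirectSum ι (fun _ : ι => ↥(F.obj (ModuleCat.of A A)))) }
  have hc := isColimitOfPreserves F (cofanIsColimit (A := A) ι)
  refine ⟨(DirectSum.toAddMonoid fun i => c i).comp (hc.desc c₂).hom.toAddMonoidHom,
    fun i y => ?_⟩
  have hfac := hc.fac c₂ ⟨i⟩
  have he : (hc.desc c₂) (F.map ((cofan (A := A) ι).inj i) y)
      = DirectSum.lof B ι (fun _ => ↥(F.obj (ModuleCat.of A A))) i y := by
    have := congrArg (fun (f : F.obj (ModuleCat.of A A) ⟶ c₂.pt) => f y) hfac
    exact this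
  show (DirectSum.toAddMonoid fun i => c i)
      ((hc.desc c₂) (F.map ((cofan (A := A) ι).inj i) y)) = c i y
  rw [he, DirectSum.lof_eq_of, DirectSum.toAddMonoid_of]

end Fside

end
end EWaux

open EWaux

/-- Eilenberg–Watts: an additive, right exact functor
`F : A-Mod → B-Mod` preserving arbitrary direct sums is naturally isomorphic to
`F(A) ⊗_A (-)`, where `F(A)` carries the right `A`-action `y · a = F(r_a)(y)`. -/
theorem eilenberg_watts (A B : Type u) [Ring A] [Ring B]
    (F : ModuleCat.{u} A ⥤ ModuleCat.{u} B) [F.Additive]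
    [PreservesFiniteColimits F]
    (hsums : ∀ J : Type u, Nonempty (PreservesColimitsOfShape (Discrete J) F)) :
    IsTensorFunctor A B (F.obj (ModuleCat.of A A))
      (fun y a => F.map (rmul A a) y) F := by
  refine ⟨fun V y v => F.map (toSpan V v) y, ?_, ?_, ?_, ?_, ?_, ?_⟩
  · intro V y y' v
    exact map_add (F.map (toSpan V v)).hom y y'
  · intro V y v v'
    show F.map (toSpan V (v + v')) y = F.map (toSpan V v) y + F.map (toSpan V v') y
    rw [toSpan_add, F.map_add]
    rfl
  · intro V y a v
    show F.map (toSpan V v) (F.map (rmul A a) y) = F.map (toSpan V (a • v)) y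
    rw [← rmul_comp_toSpan, F.map_comp]
    rfl
  · intro V b y v
    exact map_smul (F.map (toSpan V v)).hom b y
  · intro V W f y v
    show F.map f (F.map (toSpan V v) y) = F.map (toSpan W (f v)) y
    rw [← toSpan_comp f v, F.map_comp]
    rfl
  · intro V T _ γ hγ1 hγ2 hγ3
    haveI h1 : PreservesColimitsOfShape (Discrete (V : Type u)) F := (hsums _).some
    haveI h2 : PreservesColimitsOfShape
        (Discrete (LinearMap.ker (eps V).hom : Type u)) F := (hsums _).some
    have hγ0 : ∀ y, γ y (0 : V) = 0 := by
      intro y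
      have := hγ2 y 0 0
      rw [add_zero] at this
      exact (left_eq_add.mp this)
    obtain ⟨g, hg⟩ := exists_addHom F (V : Type u)
      (fun v => AddMonoidHom.mk' (fun y => γ y v) (fun y y' => hγ1 y y' v))
    -- key computation
    have key : ∀ (w : (V : Type u) →₀ A) (y : F.obj (ModuleCat.of A A)),
        g (F.map (toSpan (ModuleCat.of A ((V : Type u) →₀ A)) w) y) = γ y (eps V w) := by
      intro w
      induction w using Finsupp.induction with
      | zero =>
        intro y
        rw [toSpan_zero, F.map_zero]
        show g 0 = γ y (eps V 0)
        rw [map_zero, map_zero, hγ0]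
      | single_add v a w _ _ ih =>
        intro y
        rw [toSpan_add, F.map_add]
        show g (F.map (toSpan _ (Finsupp.single v a)) y
          + F.map (toSpan _ w) y) = _
        rw [map_add, ih, single_toSpan, F.map_comp]
        show g (F.map ((cofan (A := A) (V : Type u)).inj v) (F.map (rmul A a) y)) + _ = _
        rw [hg]
        show γ (F.map (rmul A a) y) v + γ y (eps V w) = _
        rw [hγ3, map_add, eps_single, hγ2]
    -- g kills the image of F.map (qmap V)
    have hK : ∀ z, g (F.map (qmap V) z) = 0 := by
      intro z
      refine addHom_eq_zero F _ (g.comp (F.map (qmap V)).hom.toAddMonoidHom) ?_ z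
      intro k y
      show g (F.map (qmap V) (F.map ((cofan (A := A) _).inj k) y)) = 0
      rw [show F.map (qmap V) (F.map ((cofan (A := A) _).inj k) y)
          = F.map ((cofan (A := A) _).inj k ≫ qmap V) y by exact (congrArg (fun φ => φ.hom y) (F.map_comp ((cofan (A := A) _).inj k) (qmap V))).symm]
      rw [inj_comp_qmap, key]
      have hk0 : eps V k.1 = 0 := k.2
      rw [hk0, hγ0]
    -- F.map (eps V) is surjective
    have hsurj : Function.Surjective (F.map (eps V)) := by
      have : Epi (F.map (eps V)) := F.map_epi _
      exact (ModuleCat.epi_iff_surjective _).mp this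
    -- kernel of F.map (eps V) is contained in range of F.map (qmap V)
    have hker : ∀ x, F.map (eps V) x = 0 → ∃ z, F.map (qmap V) z = x := by
      have hcolim := isColimitCoforkMapOfIsColimit' F (qmap_eps V) (epsIsCokernel V)
      set R := LinearMap.range (F.map (qmap V)).hom with hR
      let πh : F.obj (ModuleCat.of A ((V : Type u) →₀ A)) ⟶ ModuleCat.of B (_ ⧸ R) := ModuleCat.ofHom R.mkQ
      have hw : F.map (qmap V) ≫ πh = 0 := by
        ext z
        show R.mkQ (F.map (qmap V) z) = (0 : _ →ₗ[B] _) (F.map (qmap V) z)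
        rw [LinearMap.zero_apply, Submodule.mkQ_apply, Submodule.Quotient.mk_eq_zero]
        exact ⟨z, rfl⟩
      obtain ⟨u, hu⟩ := CokernelCofork.IsColimit.desc' hcolim πh hw
      intro x hx
      have hx0 : πh x = 0 := by
        have h1 : F.map (eps V) ≫ u = πh := hu
        have := congrArg (fun (f : _ ⟶ ModuleCat.of B (_ ⧸ R)) => f x) h1
        dsimp at this
        rw [← this, hx, map_zero]
      exact (Submodule.Quotient.mk_eq_zero R).mp hx0
    have hker_g : ∀ x, F.map (eps V) x = 0 → g x = 0 := by
      intro x hx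
      obtain ⟨z, rfl⟩ := hker x hx
      exact hK z
    -- the descended additive map
    have hsec := Function.rightInverse_surjInv hsurj
    have hkey2 : ∀ w x, F.map (eps V) w = x → g w = g (Function.surjInv hsurj x) := by
      intro w x hwx
      have h0 : F.map (eps V) (w - Function.surjInv hsurj x) = 0 := by
        rw [map_sub, hwx, hsec, sub_self]
      have := hker_g _ h0
      rw [map_sub] at this
      exact sub_eq_zero.mp this
    refine ⟨AddMonoidHom.mk' (fun x => g (Function.surjInv hsurj x)) (fun x x' => ?_),
      fun y v => ?_, fun h' hh' => ?_⟩
    · show g (Function.surjInv hsurj (x + x'))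
          = g (Function.surjInv hsurj x) + g (Function.surjInv hsurj x')
      have := hkey2 (Function.surjInv hsurj x + Function.surjInv hsurj x') (x + x')
        (by rw [map_add, hsec, hsec])
      rw [← this, map_add]
    · -- value on β
      have hfac : F.map (eps V) (F.map ((cofan (A := A) (V : Type u)).inj v) y)
          = F.map (toSpan V v) y := by
        rw [show F.map (eps V) (F.map ((cofan (A := A) (V : Type u)).inj v) y)
            = F.map ((cofan (A := A) (V : Type u)).inj v ≫ eps V) y by exact (congrArg (fun φ => φ.hom y) (F.map_comp ((cofan (A := A) (V : Type u)).inj v) (eps V))).symm]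
        rw [inj_comp_eps]
      have := hkey2 _ _ hfac
      show g (Function.surjInv hsurj (F.map (toSpan V v) y)) = γ y v
      rw [← this, hg]
      rfl
    · -- uniqueness
      have hdiff : ∀ z, h' (F.map (eps V) z) = g z := by
        intro z
        have hz : ∀ z, (h'.comp (F.map (eps V)).hom.toAddMonoidHom - g) z = 0 := by
          refine addHom_eq_zero F _ _ ?_
          intro v y
          have hfac : F.map (eps V) (F.map ((cofan (A := A) (V : Type u)).inj v) y)
              = F.map (toSpan V v) y := by
            rw [show F.map (eps V) (F.map ((cofan (A := A) (V : Type u)).inj v) y)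
                = F.map ((cofan (A := A) (V : Type u)).inj v ≫ eps V) y by
                exact (congrArg (fun φ => φ.hom y) (F.map_comp ((cofan (A := A) (V : Type u)).inj v) (eps V))).symm]
            rw [inj_comp_eps]
          rw [AddMonoidHom.sub_apply, AddMonoidHom.comp_apply]
          show h' (F.map (eps V) (F.map ((cofan (A := A) (V : Type u)).inj v) y)) - g _ = 0
          rw [hfac, hh' y v, hg]
          show γ y v - γ y v = 0
          rw [sub_self]
        have := hz z
        rw [AddMonoidHom.sub_apply, AddMonoidHom.comp_apply] at this
        exact sub_eq_zero.mp this
      refine AddMonoidHom.ext fun x => ?_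
      obtain ⟨w, rfl⟩ := hsurj x
      rw [hdiff w]
      show g w = g (Function.surjInv hsurj (F.map (eps V) w))
      exact hkey2 w _ rfl
end
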